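/- arXiv:1806.00106 — 12 statements merged into one kernel-verified Lean document; each statement's English description precedes it below -/
import Mathlib

section
/- Let 𝒜 and ℬ be almost disjoint families on ω and let H : Ψ(𝒜) → Ψ(ℬ) be a bijection. Then H is a homeomorphism if and only if H[ω] = ω and for every A ∈ 𝒜, the set H[A] (the pointwise image of A ⊆ ω under H) and the set H(A) ∈ ℬ are almost equal as subsets of ω (i.e., their symmetric difference is finite). -/
open Set

/-- An almost disjoint family on ω: an infinite family of infinite subsets of ℕ
such that any two distinct members have finite intersection. -/
def ADFamily (𝒜 : Set (Set ℕ)) : Prop :=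
  𝒜.Infinite ∧ (∀ A ∈ 𝒜, A.Infinite) ∧
    ∀ A ∈ 𝒜, ∀ B ∈ 𝒜, A ≠ B → (A ∩ B).Finite

/-- The Ψ-space topology on ℕ ⊕ 𝒜: points of ℕ are isolated, and basic
neighborhoods of A ∈ 𝒜 are {A} ∪ (A \ F) for F finite. -/
def psiTop (𝒜 : Set (Set ℕ)) : TopologicalSpace (ℕ ⊕ ↥𝒜) :=
  TopologicalSpace.generateFrom
    ({U | ∃ n : ℕ, U = {Sum.inl n}} ∪
     {U | ∃ (A : ↥𝒜) (F : Finset ℕ),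
        U = insert (Sum.inr A) (Sum.inl '' ((A : Set ℕ) \ ↑F))})

lemma psi_isOpen_iff (𝒜 : Set (Set ℕ)) (U : Set (ℕ ⊕ ↥𝒜)) :
    @IsOpen _ (psiTop 𝒜) U ↔
      ∀ A : ↥𝒜, Sum.inr A ∈ U → ∃ F : Finset ℕ, Sum.inl '' ((A : Set ℕ) \ ↑F) ⊆ U := by
  constructor
  · intro h
    change TopologicalSpace.GenerateOpen _ U at h
    induction h with
    | basic V hV =>
        intro A hA
        rcases hV with ⟨n, rfl⟩ | ⟨A', F, rfl⟩
        · simp at hA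
        · have hAA : A = A' := by
            rcases hA with h | h
            · exact Sum.inr.inj h
            · obtain ⟨m, _, hm⟩ := h; cases hm
          subst hAA
          exact ⟨F, subset_insert _ _⟩
    | univ => exact fun A _ => ⟨∅, by simp⟩
    | inter U V _ _ ihU ihV =>
        intro A hA
        obtain ⟨F1, h1⟩ := ihU A hA.1
        obtain ⟨F2, h2⟩ := ihV A hA.2
        refine ⟨F1 ∪ F2, fun x hx => ?_⟩
        obtain ⟨n, hn, rfl⟩ := hx
        rw [Finset.coe_union] at hn
        constructor
        · exact h1 ⟨n, ⟨hn.1, fun c => hn.2 (Or.inl c)⟩, rfl⟩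
        · exact h2 ⟨n, ⟨hn.1, fun c => hn.2 (Or.inr c)⟩, rfl⟩
    | sUnion S _ ih =>
        intro A hA
        obtain ⟨t, ht, hAt⟩ := hA
        obtain ⟨F, hF⟩ := ih t ht A hAt
        exact ⟨F, hF.trans (subset_sUnion_of_mem ht)⟩
  · intro h
    letI := psiTop 𝒜
    rw [isOpen_iff_forall_mem_open]
    rintro (n | A) hx
    · exact ⟨{Sum.inl n}, by simpa using hx,
        TopologicalSpace.GenerateOpen.basic _ (Or.inl ⟨n, rfl⟩), rfl⟩
    · obtain ⟨F, hF⟩ := h A hx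
      refine ⟨insert (Sum.inr A) (Sum.inl '' ((A : Set ℕ) \ ↑F)), ?_, ?_, ?_⟩
      · exact insert_subset hx hF
      · exact TopologicalSpace.GenerateOpen.basic _ (Or.inr ⟨A, F, rfl⟩)
      · exact mem_insert _ _

lemma psi_continuous (𝒜 ℬ : Set (Set ℕ)) (H : (ℕ ⊕ ↥𝒜) → (ℕ ⊕ ↥ℬ))
    (e : ℕ → ℕ) (heinj : Function.Injective e)
    (he : ∀ n, H (Sum.inl n) = Sum.inl (e n))
    (hinr : ∀ A : ↥𝒜, ∃ B : ↥ℬ, H (Sum.inr A) = Sum.inr B)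
    (halmost : ∀ (A : ↥𝒜) (B : ↥ℬ), H (Sum.inr A) = Sum.inr B →
      ((e '' (A : Set ℕ) \ (B : Set ℕ)) ∪ ((B : Set ℕ) \ e '' (A : Set ℕ))).Finite) :
    @Continuous _ _ (psiTop 𝒜) (psiTop ℬ) H := by
  apply continuous_generateFrom_iff.mpr
  rintro V (⟨m, rfl⟩ | ⟨B, F, rfl⟩) <;> rw [psi_isOpen_iff]
  · intro A hA
    obtain ⟨B, hB⟩ := hinr A
    simp only [mem_preimage, hB, mem_singleton_iff] at hA
    cases hA
  · intro A hA
    obtain ⟨B', hB'⟩ := hinr A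
    simp only [mem_preimage, hB', mem_insert_iff] at hA
    have hBB : B' = B := by
      rcases hA with h | ⟨m, _, hm⟩
      · exact Sum.inr.inj h
      · cases hm
    subst hBB
    have hfin : ((e '' (A : Set ℕ) \ (B' : Set ℕ)) ∪ ((B' : Set ℕ) \ e '' (A : Set ℕ))).Finite :=
      halmost A B' hB'
    have hfin2 : ((e '' (A : Set ℕ) \ (B' : Set ℕ)) ∪ ↑F).Finite :=
      (hfin.subset subset_union_left).union (F.finite_toSet)
    have hpre : (e ⁻¹' ((e '' (A : Set ℕ) \ (B' : Set ℕ)) ∪ ↑F)).Finite :=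
      hfin2.preimage (heinj.injOn)
    refine ⟨hpre.toFinset, fun x hx => ?_⟩
    obtain ⟨n, ⟨hnA, hnF⟩, rfl⟩ := hx
    rw [Finite.coe_toFinset] at hnF
    have henB : e n ∈ (B' : Set ℕ) := by
      by_contra hc
      exact hnF (Or.inl ⟨⟨n, hnA, rfl⟩, hc⟩)
    have henF : e n ∉ (F : Set ℕ) := fun hc => hnF (Or.inr hc)
    rw [mem_preimage, he]
    exact Or.inr ⟨e n, ⟨henB, henF⟩, rfl⟩

/-- Lemma 3: a bijection H : Ψ(𝒜) → Ψ(ℬ) is a homeomorphism iff H[ω] = ω and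
for every A ∈ 𝒜 the pointwise image H[A] and H(A) are almost equal subsets of ω. -/
theorem psi_homeomorph_iff (𝒜 ℬ : Set (Set ℕ)) (h𝒜 : ADFamily 𝒜) (hℬ : ADFamily ℬ)
    (H : (ℕ ⊕ ↥𝒜) → (ℕ ⊕ ↥ℬ)) (hH : Function.Bijective H) :
    @IsHomeomorph _ _ (psiTop 𝒜) (psiTop ℬ) H ↔
      (H '' (Set.range Sum.inl) = Set.range Sum.inl ∧
        ∀ (A : ↥𝒜) (B : ↥ℬ), H (Sum.inr A) = Sum.inr B →
          (({m : ℕ | ∃ n ∈ (A : Set ℕ), H (Sum.inl n) = Sum.inl m} \ (B : Set ℕ)) ∪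
           ((B : Set ℕ) \ {m : ℕ | ∃ n ∈ (A : Set ℕ), H (Sum.inl n) = Sum.inl m})).Finite) := by
  letI : TopologicalSpace (ℕ ⊕ ↥𝒜) := psiTop 𝒜
  letI : TopologicalSpace (ℕ ⊕ ↥ℬ) := psiTop ℬ
  constructor
  · intro hHom
    have h1 : ∀ n, ∃ m, H (Sum.inl n) = Sum.inl m := by
      intro n
      cases hn : H (Sum.inl n) with
      | inl m => exact ⟨m, rfl⟩
      | inr B =>
        exfalso
        have hop : @IsOpen _ (psiTop ℬ) (H '' {Sum.inl n}) :=
          hHom.isOpenMap _ (TopologicalSpace.GenerateOpen.basic _ (Or.inl ⟨n, rfl⟩))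
        rw [image_singleton, hn, psi_isOpen_iff] at hop
        obtain ⟨F, hF⟩ := hop B rfl
        obtain ⟨x, hx⟩ := ((hℬ.2.1 B B.2).diff F.finite_toSet).nonempty
        have := hF ⟨x, hx, rfl⟩
        simp at this
    have h2 : ∀ m, ∃ n, H (Sum.inl n) = Sum.inl m := by
      intro m
      obtain ⟨x, hx⟩ := hH.2 (Sum.inl m)
      cases x with
      | inl n => exact ⟨n, hx⟩
      | inr A =>
        have hop : @IsOpen _ (psiTop 𝒜) (H ⁻¹' {Sum.inl m}) :=
          hHom.continuous.isOpen_preimage _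
            (TopologicalSpace.GenerateOpen.basic _ (Or.inl ⟨m, rfl⟩))
        rw [psi_isOpen_iff] at hop
        obtain ⟨F, hF⟩ := hop A (by simp [hx])
        obtain ⟨y, hy⟩ := ((h𝒜.2.1 A A.2).diff F.finite_toSet).nonempty
        exact ⟨y, hF ⟨y, hy, rfl⟩⟩
    constructor
    · ext x
      constructor
      · rintro ⟨y, ⟨n, rfl⟩, rfl⟩
        obtain ⟨m, hm⟩ := h1 n
        exact ⟨m, hm.symm⟩
      · rintro ⟨m, rfl⟩
        obtain ⟨n, hn⟩ := h2 m
        exact ⟨Sum.inl n, ⟨n, rfl⟩, hn⟩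
    · intro A B hAB
      set S := {m : ℕ | ∃ n ∈ (A : Set ℕ), H (Sum.inl n) = Sum.inl m} with hS
      set e : ℕ → ℕ := fun n => Sum.elim id (fun _ => 0) (H (Sum.inl n)) with hedef
      have he : ∀ n, H (Sum.inl n) = Sum.inl (e n) := by
        intro n
        obtain ⟨m, hm⟩ := h1 n
        rw [hm, hedef]; simp [hm]
      -- S \ B finite
      have hVop : @IsOpen _ (psiTop 𝒜)
          (H ⁻¹' (insert (Sum.inr B) (Sum.inl '' ((B : Set ℕ) \ ↑(∅ : Finset ℕ))))) :=
        hHom.continuous.isOpen_preimage _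
          (TopologicalSpace.GenerateOpen.basic _ (Or.inr ⟨B, ∅, rfl⟩))
      rw [psi_isOpen_iff] at hVop
      obtain ⟨F, hF⟩ := hVop A (by simp [hAB])
      have hSB : S \ (B : Set ℕ) ⊆ e '' ↑F := by
        rintro m ⟨⟨n, hnA, hn⟩, hmB⟩
        by_cases hnF : n ∈ F
        · exact ⟨n, hnF, by rw [he n] at hn; exact Sum.inl.inj hn⟩
        · exfalso
          have := hF ⟨n, ⟨hnA, hnF⟩, rfl⟩
          rw [mem_preimage, hn] at this
          rcases this with h | ⟨m', hm', hmm⟩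
          · cases h
          · exact hmB (by rw [← Sum.inl.inj hmm]; simpa using hm'.1)
      -- B \ S finite
      have hWop : @IsOpen _ (psiTop ℬ)
          (H '' (insert (Sum.inr A) (Sum.inl '' ((A : Set ℕ) \ ↑(∅ : Finset ℕ))))) :=
        hHom.isOpenMap _ (TopologicalSpace.GenerateOpen.basic _ (Or.inr ⟨A, ∅, rfl⟩))
      rw [psi_isOpen_iff] at hWop
      obtain ⟨F2, hF2⟩ := hWop B ⟨Sum.inr A, mem_insert _ _, hAB⟩
      have hBS : (B : Set ℕ) \ S ⊆ ↑F2 := by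
        rintro m ⟨hmB, hmS⟩
        by_contra hmF
        obtain ⟨x, hxW, hx⟩ := hF2 ⟨m, ⟨hmB, hmF⟩, rfl⟩
        rcases hxW with h | ⟨n, hn, hnx⟩
        · rw [h, hAB] at hx; cases hx
        · rw [← hnx] at hx
          exact hmS ⟨n, by simpa using hn, hx⟩
      exact ((F.finite_toSet.image e).subset hSB).union (F2.finite_toSet.subset hBS)
  · rintro ⟨himg, halm⟩
    have h1 : ∀ n, ∃ m, H (Sum.inl n) = Sum.inl m := by
      intro n
      have : H (Sum.inl n) ∈ Set.range (Sum.inl : ℕ → ℕ ⊕ ↥ℬ) := by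
        rw [← himg]; exact ⟨Sum.inl n, ⟨n, rfl⟩, rfl⟩
      obtain ⟨m, hm⟩ := this
      exact ⟨m, hm.symm⟩
    have h2 : ∀ m, ∃ n, H (Sum.inl n) = Sum.inl m := by
      intro m
      have : (Sum.inl m : ℕ ⊕ ↥ℬ) ∈ H '' Set.range Sum.inl := by
        rw [himg]; exact ⟨m, rfl⟩
      obtain ⟨x, ⟨n, rfl⟩, hx⟩ := this
      exact ⟨n, hx⟩
    set e : ℕ → ℕ := fun n => Sum.elim id (fun _ => 0) (H (Sum.inl n)) with hedef
    have he : ∀ n, H (Sum.inl n) = Sum.inl (e n) := by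
      intro n
      obtain ⟨m, hm⟩ := h1 n
      rw [hm, hedef]; simp [hm]
    have heinj : Function.Injective e := by
      intro a b hab
      have : H (Sum.inl a) = H (Sum.inl b) := by rw [he a, he b, hab]
      exact Sum.inl.inj (hH.1 this)
    have hesurj : Function.Surjective e := by
      intro m
      obtain ⟨n, hn⟩ := h2 m
      exact ⟨n, Sum.inl.inj (by rw [← he n, hn])⟩
    have hinr : ∀ A : ↥𝒜, ∃ B : ↥ℬ, H (Sum.inr A) = Sum.inr B := by
      intro A
      cases hA : H (Sum.inr A) with
      | inl m =>
        obtain ⟨n, hn⟩ := h2 m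
        have := hH.1 (hA.trans hn.symm)
        cases this
      | inr B => exact ⟨B, rfl⟩
    have hSimage : ∀ A : ↥𝒜,
        {m : ℕ | ∃ n ∈ (A : Set ℕ), H (Sum.inl n) = Sum.inl m} = e '' (A : Set ℕ) := by
      intro A
      ext m
      simp only [mem_setOf_eq, mem_image, he, Sum.inl.injEq]
    have halmost : ∀ (A : ↥𝒜) (B : ↥ℬ), H (Sum.inr A) = Sum.inr B →
        ((e '' (A : Set ℕ) \ (B : Set ℕ)) ∪ ((B : Set ℕ) \ e '' (A : Set ℕ))).Finite := by
      intro A B hAB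
      have := halm A B hAB
      rwa [hSimage] at this
    have contH : @Continuous _ _ (psiTop 𝒜) (psiTop ℬ) H :=
      psi_continuous 𝒜 ℬ H e heinj he hinr halmost
    obtain ⟨G, hGl, hGr⟩ := Function.bijective_iff_has_inverse.mp hH
    set e' : ℕ → ℕ := Function.invFun e with he'def
    have hee' : ∀ m, e (e' m) = m := fun m => Function.rightInverse_invFun hesurj m
    have he'e : ∀ n, e' (e n) = n := fun n => Function.leftInverse_invFun heinj n
    have he'inj : Function.Injective e' := by
      intro a b hab
      rw [← hee' a, hab, hee' b]
    have he' : ∀ m, G (Sum.inl m) = Sum.inl (e' m) := by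
      intro m
      have hm : H (Sum.inl (e' m)) = Sum.inl m := by rw [he, hee']
      rw [← hm, hGl]
    have hinr' : ∀ B : ↥ℬ, ∃ A : ↥𝒜, G (Sum.inr B) = Sum.inr A := by
      intro B
      cases hB : G (Sum.inr B) with
      | inl n =>
        have := congrArg H hB
        rw [hGr, he] at this
        cases this
      | inr A => exact ⟨A, rfl⟩
    have halmost' : ∀ (B : ↥ℬ) (A : ↥𝒜), G (Sum.inr B) = Sum.inr A →
        ((e' '' (B : Set ℕ) \ (A : Set ℕ)) ∪ ((A : Set ℕ) \ e' '' (B : Set ℕ))).Finite := by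
      intro B A hBA
      have hABH : H (Sum.inr A) = Sum.inr B := by rw [← hBA, hGr]
      have hfin := halmost A B hABH
      have hA' : e' '' (e '' (A : Set ℕ)) = (A : Set ℕ) := by
        rw [Set.image_image]
        simp only [he'e, image_id']
      have hkey : (e' '' (B : Set ℕ) \ (A : Set ℕ)) ∪ ((A : Set ℕ) \ e' '' (B : Set ℕ))
          = e' '' ((e '' (A : Set ℕ) \ (B : Set ℕ)) ∪ ((B : Set ℕ) \ e '' (A : Set ℕ))) := by
        rw [image_union, Set.image_diff he'inj, Set.image_diff he'inj, hA', union_comm]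
      rw [hkey]
      exact hfin.image e'
    have contG : @Continuous _ _ (psiTop ℬ) (psiTop 𝒜) G :=
      psi_continuous ℬ 𝒜 G e' he'inj he' hinr' halmost'
    refine ⟨contH, ?_, hH⟩
    intro U hU
    rw [Set.image_eq_preimage_of_inverse hGl hGr]
    exact contG.isOpen_preimage _ hU
end

section
/- Let κ be a cardinal with ω < κ and cf(κ) > ω, and let X ⊆ 2^ω be a set of size κ. Then there are infinitely many n ∈ ω for which there exists s ∈ 2^n such that both {x ∈ X : s⌢0 ⊆ x} and {x ∈ X : s⌢1 ⊆ x} have cardinality κ. -/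
open Set Cardinal

/-- The cone of elements of `X` extending `s`. -/
def cone (X : Set (ℕ → Bool)) {n : ℕ} (s : Fin n → Bool) : Set (ℕ → Bool) :=
  {x ∈ X | ∀ i : Fin n, x i = s i}

lemma cone_snoc (X : Set (ℕ → Bool)) {n : ℕ} (s : Fin n → Bool) (b : Bool) :
    cone X (Fin.snoc s b) = {x ∈ X | (∀ i : Fin n, x i = s i) ∧ x n = b} := by
  ext x
  simp only [cone, mem_setOf_eq, and_congr_right_iff]
  intro _
  constructor
  · intro h
    constructor
    · intro i
      have := h i.castSucc
      simpa [Fin.snoc] using this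
    · have := h (Fin.last n)
      simpa [Fin.snoc] using this
  · rintro ⟨h1, h2⟩ i
    refine Fin.lastCases ?_ ?_ i
    · simpa [Fin.snoc] using h2
    · intro j
      simpa [Fin.snoc] using h1 j

lemma cone_eq_union (X : Set (ℕ → Bool)) {n : ℕ} (s : Fin n → Bool) :
    cone X s = cone X (Fin.snoc s false) ∪ cone X (Fin.snoc s true) := by
  ext x
  simp only [cone, mem_setOf_eq, mem_union]
  constructor
  · rintro ⟨hx, hs⟩
    cases hb : x n
    · left
      refine ⟨hx, fun i => ?_⟩
      refine Fin.lastCases ?_ ?_ i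
      · simpa [Fin.snoc] using hb
      · intro j; simpa [Fin.snoc] using hs j
    · right
      refine ⟨hx, fun i => ?_⟩
      refine Fin.lastCases ?_ ?_ i
      · simpa [Fin.snoc] using hb
      · intro j; simpa [Fin.snoc] using hs j
  · rintro (⟨hx, hs⟩ | ⟨hx, hs⟩) <;>
    · exact ⟨hx, fun i => by simpa [Fin.snoc] using hs i.castSucc⟩

/-- If X ⊆ 2^ω has size κ with ω < κ and cf(κ) > ω, then for infinitely many n
there is s ∈ 2^n such that both {x ∈ X : s⌢0 ⊆ x} and {x ∈ X : s⌢1 ⊆ x}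
have cardinality κ. -/
theorem infinitely_many_splitting_cones (κ : Cardinal) (hκ : Cardinal.aleph0 < κ)
    (hcf : Cardinal.aleph0 < κ.ord.cof)
    (X : Set (ℕ → Bool)) (hX : Cardinal.mk ↥X = κ) :
    {n : ℕ | ∃ s : Fin n → Bool,
      Cardinal.mk ↥{x ∈ X | (∀ i : Fin n, x i = s i) ∧ x n = false} = κ ∧
      Cardinal.mk ↥{x ∈ X | (∀ i : Fin n, x i = s i) ∧ x n = true} = κ}.Infinite := by
  by_contra hfin
  rw [Set.not_infinite] at hfin
  obtain ⟨N, hN⟩ := hfin.bddAbove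
  -- for all n ≥ N+1, n is not a splitting level
  have hbad : ∀ n, N < n → ∀ s : Fin n → Bool,
      ¬ (Cardinal.mk ↥{x ∈ X | (∀ i : Fin n, x i = s i) ∧ x n = false} = κ ∧
      Cardinal.mk ↥{x ∈ X | (∀ i : Fin n, x i = s i) ∧ x n = true} = κ) := by
    intro n hn s hs
    exact absurd (hN ⟨s, hs⟩) (Nat.not_le.2 hn)
  -- each cone has cardinality ≤ κ
  have hle : ∀ {n : ℕ} (s : Fin n → Bool), Cardinal.mk ↥(cone X s) ≤ κ := by
    intro n s
    rw [← hX]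
    exact Cardinal.mk_le_mk_of_subset (fun x hx => hx.1)
  -- splitting step: if a cone at level n > N has size κ, exactly one child does
  have hstep : ∀ {n : ℕ}, N < n → ∀ s : Fin n → Bool, Cardinal.mk ↥(cone X s) = κ →
      ∃ b : Bool, Cardinal.mk ↥(cone X (Fin.snoc s b)) = κ ∧
        Cardinal.mk ↥(cone X (Fin.snoc s (!b))) < κ := by
    intro n hn s hs
    have hunion := cone_eq_union X s
    have hsum : κ ≤ Cardinal.mk ↥(cone X (Fin.snoc s false)) +
        Cardinal.mk ↥(cone X (Fin.snoc s true)) := by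
      rw [← hs, hunion]
      exact Cardinal.mk_union_le _ _
    have hone : Cardinal.mk ↥(cone X (Fin.snoc s false)) = κ ∨
        Cardinal.mk ↥(cone X (Fin.snoc s true)) = κ := by
      by_contra hc
      push_neg at hc
      have h1 : Cardinal.mk ↥(cone X (Fin.snoc s false)) < κ :=
        lt_of_le_of_ne (hle _) hc.1
      have h2 : Cardinal.mk ↥(cone X (Fin.snoc s true)) < κ :=
        lt_of_le_of_ne (hle _) hc.2
      have := Cardinal.add_lt_of_lt (le_of_lt hκ) h1 h2
      exact absurd hsum (not_le_of_gt this)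
    have hnotboth := hbad n hn s
    rw [← cone_snoc, ← cone_snoc] at hnotboth
    rcases hone with h | h
    · refine ⟨false, h, ?_⟩
      have : Cardinal.mk ↥(cone X (Fin.snoc s true)) ≠ κ := fun hc => hnotboth ⟨h, hc⟩
      exact lt_of_le_of_ne (hle _) this
    · refine ⟨true, h, ?_⟩
      have : Cardinal.mk ↥(cone X (Fin.snoc s false)) ≠ κ := fun hc => hnotboth ⟨hc, h⟩
      exact lt_of_le_of_ne (hle _) this
  -- there is a cone at level N+1 with size κ
  have hbase : ∃ s : Fin (N+1) → Bool, Cardinal.mk ↥(cone X s) = κ := by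
    by_contra hc
    push_neg at hc
    have hcov : X ⊆ ⋃ s : Fin (N+1) → Bool, cone X s := by
      intro x hx
      exact mem_iUnion.2 ⟨fun i => x i, hx, fun i => rfl⟩
    have h1 : κ ≤ Cardinal.mk ↥(⋃ s : Fin (N+1) → Bool, cone X s) := by
      rw [← hX]; exact Cardinal.mk_le_mk_of_subset hcov
    have h2 : Cardinal.mk ↥(⋃ s : Fin (N+1) → Bool, cone X s) ≤
        Cardinal.mk (Fin (N+1) → Bool) * ⨆ s : Fin (N+1) → Bool, Cardinal.mk ↥(cone X s) :=
      Cardinal.mk_iUnion_le _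
    have hι : Cardinal.mk (Fin (N+1) → Bool) < κ := by
      have : Cardinal.mk (Fin (N+1) → Bool) < Cardinal.aleph0 :=
        Cardinal.lt_aleph0_of_finite _
      exact this.trans hκ
    have hsup : (⨆ s : Fin (N+1) → Bool, Cardinal.mk ↥(cone X s)) < κ := by
      apply Ordinal.iSup_lt
      · exact (Cardinal.lt_aleph0_of_finite _).trans hcf
      · exact fun s => lt_of_le_of_ne (hle s) (hc s)
    have := Cardinal.mul_lt_of_lt (le_of_lt hκ) hι hsup
    exact absurd (h1.trans h2) (not_le_of_gt this)
  obtain ⟨s₀, hs₀⟩ := hbase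
  -- build the chain of cones of size κ
  let T : ℕ → Type := fun n => {s : Fin (N+1+n) → Bool // Cardinal.mk ↥(cone X s) = κ}
  have hn' : ∀ n : ℕ, N < N+1+n := fun n => by omega
  let hrec : ∀ n, T n → T (n+1) := fun n p =>
    ⟨Fin.snoc p.1 (hstep (hn' n) p.1 p.2).choose,
     (hstep (hn' n) p.1 p.2).choose_spec.1⟩
  let t : ∀ n, T n := fun n => Nat.rec ⟨s₀, hs₀⟩ hrec n
  have ht : ∀ n, (t (n+1)).1 = Fin.snoc (t n).1 (hstep (hn' n) (t n).1 (t n).2).choose :=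
    fun n => rfl
  -- the bad sets
  let bad : ℕ → Set (ℕ → Bool) := fun n => cone X (t n).1 \ cone X (t (n+1)).1
  have hbadlt : ∀ n, Cardinal.mk ↥(bad n) < κ := by
    intro n
    obtain ⟨b, hb1, hb2⟩ : ∃ b, (t (n+1)).1 = Fin.snoc (t n).1 b ∧
        Cardinal.mk ↥(cone X (Fin.snoc (t n).1 (!b))) < κ :=
      ⟨_, ht n, (hstep (hn' n) (t n).1 (t n).2).choose_spec.2⟩
    have hsub : bad n ⊆ cone X (Fin.snoc (t n).1 (!b)) := by
      rintro y ⟨hy1, hy2⟩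
      rw [hb1] at hy2
      rw [cone_eq_union X (t n).1] at hy1
      cases b
      · rcases hy1 with h | h
        · exact absurd h hy2
        · exact h
      · rcases hy1 with h | h
        · exact h
        · exact absurd h hy2
    exact lt_of_le_of_lt (Cardinal.mk_le_mk_of_subset hsub) hb2
  -- residual set is a subsingleton
  have hmem : ∀ y ∈ cone X s₀ \ ⋃ n, bad n, ∀ n, y ∈ cone X (t n).1 := by
    rintro y ⟨hy1, hy2⟩ n
    induction n with
    | zero => exact hy1
    | succ n ih =>
      by_contra hc
      exact hy2 (mem_iUnion.2 ⟨n, ih, hc⟩)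
  have hsub : (cone X s₀ \ ⋃ n, bad n).Subsingleton := by
    intro y hy z hz
    funext m
    have hy' := hmem y hy m
    have hz' := hmem z hz m
    have hm : m < N+1+m := by omega
    have h1 := hy'.2 ⟨m, hm⟩
    have h2 := hz'.2 ⟨m, hm⟩
    rw [h1, h2]
  -- cardinality bound
  have hU : Cardinal.mk ↥(⋃ n, bad n) < κ := by
    have h2 : Cardinal.mk ↥(⋃ n, bad n) ≤ Cardinal.mk ℕ * ⨆ n, Cardinal.mk ↥(bad n) :=
      Cardinal.mk_iUnion_le _
    have hsup : (⨆ n, Cardinal.mk ↥(bad n)) < κ := by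
      apply Ordinal.iSup_lt
      · rwa [Cardinal.mk_nat]
      · exact hbadlt
    have : Cardinal.mk ℕ * (⨆ n, Cardinal.mk ↥(bad n)) < κ := by
      rw [Cardinal.mk_nat]
      exact Cardinal.mul_lt_of_lt (le_of_lt hκ) hκ hsup
    exact lt_of_le_of_lt h2 this
  have hres : Cardinal.mk ↥(cone X s₀ \ ⋃ n, bad n) ≤ 1 :=
    Cardinal.mk_le_one_iff_set_subsingleton.2 hsub
  have hfinal : Cardinal.mk ↥(cone X s₀) < κ := by
    have h1 : Cardinal.mk ↥(cone X s₀) ≤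
        Cardinal.mk ↥(cone X s₀ \ ⋃ n, bad n) + Cardinal.mk ↥(⋃ n, bad n) :=
      Cardinal.le_mk_diff_add_mk _ _
    have h2 : Cardinal.mk ↥(cone X s₀ \ ⋃ n, bad n) + Cardinal.mk ↥(⋃ n, bad n) < κ :=
      Cardinal.add_lt_of_lt (le_of_lt hκ)
        (lt_of_le_of_lt hres (lt_trans Cardinal.one_lt_aleph0 hκ)) hU
    exact lt_of_le_of_lt h1 h2
  exact absurd hs₀ (ne_of_lt hfinal)
end

section
/- Let 𝒜 be an almost disjoint family on ω of size κ, where cf(κ) > ω. Then for every n ∈ ω there exists m > n such that both {x ∈ 𝒜 : m ∈ x} and {x ∈ 𝒜 : m ∉ x} have cardinality κ. -/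
open Set Cardinal

/-!
Write κ = |𝒜|. Choosing in every member an element above `n` and applying the pigeonhole
principle (ω < cf κ) gives some `m > n` lying in κ many members. On the other hand only finitely
many `m` can be omitted by fewer than κ members: if `S` were a countably infinite set of such `m`,
then, again since ω < cf κ, fewer than κ members would omit some point of `S`; all others contain
`S`, but two distinct members cannot both contain the infinite set `S`. Taking `m` above these
finitely many exceptions gives both conclusions.
-/

universe u

namespace Cardinal

theorem mk_iUnion_lt_of_lt_cof {α ι : Type u} {f : ι → Set α} {κ : Cardinal}
    (hι : #ι < κ.ord.cof) (hκ : ℵ₀ ≤ κ) (hf : ∀ i, #(f i) < κ) : #(⋃ i, f i) < κ :=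
  (mk_iUnion_le f).trans_lt <|
    mul_lt_of_lt hκ (hι.trans_le (Ordinal.cof_ord_le κ)) (iSup_lt_of_lt_cof_ord hι hf)

end Cardinal

section AlmostDisjoint

variable {α : Type*} {𝒜 : Set (Set α)}

theorem Set.Pairwise.subsingleton_setOf_superset
    (had : 𝒜.Pairwise fun A B => (A ∩ B).Finite) {S : Set α} (hS : S.Infinite) :
    {x ∈ 𝒜 | S ⊆ x}.Subsingleton := by
  rintro A ⟨hA, hSA⟩ B ⟨hB, hSB⟩
  by_contra hAB
  exact hS ((had hA hB hAB).subset (subset_inter hSA hSB))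

theorem Set.Pairwise.finite_setOf_mk_notMem_lt
    (had : 𝒜.Pairwise fun A B => (A ∩ B).Finite) (hcf : ℵ₀ < (#𝒜).ord.cof) :
    {a : α | #{x ∈ 𝒜 | a ∉ x} < #𝒜}.Finite := by
  by_contra hT
  obtain ⟨S, hST, hS, hSinf⟩ := Set.Infinite.exists_subset_countable_infinite hT
  have hκ : ℵ₀ ≤ #𝒜 := hcf.le.trans (Ordinal.cof_ord_le _)
  have hcover : 𝒜 ⊆ {x ∈ 𝒜 | S ⊆ x} ∪ ⋃ a : S, {x ∈ 𝒜 | (a : α) ∉ x} := fun x hx => by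
    by_cases hSx : S ⊆ x
    · exact Or.inl ⟨hx, hSx⟩
    · obtain ⟨a, haS, hax⟩ := not_subset.1 hSx
      exact Or.inr (mem_iUnion.2 ⟨⟨a, haS⟩, hx, hax⟩)
  have hcontain : #{x ∈ 𝒜 | S ⊆ x} < #𝒜 :=
    (mk_le_one_iff_set_subsingleton.2 (had.subsingleton_setOf_superset hSinf)).trans_lt
      (one_lt_aleph0.trans_le hκ)
  have homit : #(⋃ a : S, {x ∈ 𝒜 | (a : α) ∉ x}) < #𝒜 :=
    mk_iUnion_lt_of_lt_cof ((mk_le_aleph0_iff.2 hS.to_subtype).trans_lt hcf) hκ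
      fun a => hST a.2
  exact ((mk_le_mk_of_subset hcover).trans (mk_union_le _ _)).not_gt
    (add_lt_of_lt hκ hcontain homit)

end AlmostDisjoint

theorem exists_gt_mk_setOf_mem_eq {𝒜 : Set (Set ℕ)} (hinf : ∀ A ∈ 𝒜, A.Infinite)
    (hcf : ℵ₀ < (#𝒜).ord.cof) (n : ℕ) : ∃ m > n, #{x ∈ 𝒜 | m ∈ x} = #𝒜 := by
  choose f hf using fun A : 𝒜 => (hinf A A.2).exists_gt n
  obtain ⟨m, t, ht𝒜, hκt, hft⟩ := infinite_pigeonhole_set f #𝒜 le_rfl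
    (hcf.le.trans (Ordinal.cof_ord_le _)) (by rwa [mk_nat])
  obtain ⟨A, hA⟩ : t.Nonempty := by
    rw [← nonempty_coe_sort, ← mk_ne_zero_iff]
    exact (hcf.trans_le (Ordinal.cof_ord_le _) |>.trans_le hκt).ne_bot
  refine ⟨m, hft hA ▸ (hf _).2, le_antisymm (mk_le_mk_of_subset (sep_subset _ _)) ?_⟩
  refine hκt.trans (mk_le_mk_of_subset fun x hx => ⟨ht𝒜 hx, ?_⟩)
  exact hft hx ▸ (hf ⟨x, ht𝒜 hx⟩).1

/-- Remark 5: if 𝒜 is an AD family of size κ with cf(κ) > ω, then for every n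
there is m > n such that κ many members of 𝒜 contain m and κ many omit m. -/
theorem adFamily_splitting (κ : Cardinal) (hcf : Cardinal.aleph0 < κ.ord.cof)
    (𝒜 : Set (Set ℕ)) (h𝒜 : ADFamily 𝒜) (hcard : Cardinal.mk ↥𝒜 = κ) :
    ∀ n : ℕ, ∃ m : ℕ, m > n ∧
      Cardinal.mk ↥{x ∈ 𝒜 | m ∈ x} = κ ∧
      Cardinal.mk ↥{x ∈ 𝒜 | m ∉ x} = κ := by
  subst hcard
  obtain ⟨-, hinf, had⟩ := h𝒜
  intro n
  obtain ⟨N, hN⟩ := (Set.Pairwise.finite_setOf_mk_notMem_lt had hcf).bddAbove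
  obtain ⟨m, hm, hmem⟩ := exists_gt_mk_setOf_mem_eq hinf hcf (max n N)
  refine ⟨m, (le_max_left n N).trans_lt hm, hmem, ?_⟩
  refine le_antisymm (mk_le_mk_of_subset (sep_subset _ _)) (not_lt.1 fun hlt => ?_)
  exact ((hN hlt).trans (le_max_right n N)).not_gt hm
end

section
/- Let 𝒜 and ℬ be almost disjoint families on ω of size κ with cf(κ) > ω, and let h : 𝒜 → ℬ be a bijection. Then for every n ∈ ω there exist x, y, z ∈ 𝒜 such that (1) max(x ∩ y) > n and x ∩ y ⊊ x ∩ z, and (2) max(h(x) ∩ h(y)) > n and h(x) ∩ h(y) ⊊ h(x) ∩ h(z). -/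
/-!
Run the two families side by side as one family `F j` of almost disjoint sets indexed by
`j : Bool`, and call a set of indices large if it has size at least `κ`. Since `cf κ > ω`,
a countable colouring of a large set is constant on a large subset. Shrinking a large set
three times: all members share an element `c j > n`; for a fixed member `x`, all traces
`F j x ∩ F j a` equal one finite set `G j`; all members share an element `d j > max (G j)`.
For two further members `y ≠ z`, the triple `(y, x, z)` works: `F j y ∩ F j x = G j` lies in
`F j y ∩ F j z`, which also contains `d j ∉ G j`.
-/

open Set Cardinal

universe u

theorem Set.inter_ssubset_inter_of_inter_eq {α : Type*} {x y z : Set α} (h : x ∩ y = x ∩ z)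
    {d : α} (hd : d ∈ y ∩ z) (hdx : d ∉ x) : y ∩ x ⊂ y ∩ z := by
  have hsub : y ∩ x ⊆ y ∩ z := fun a ha => ⟨ha.1, (h.subset ⟨ha.2, ha.1⟩).2⟩
  exact (ssubset_iff_of_subset hsub).2 ⟨d, hd, fun hd' => hdx hd'.2⟩

section LargeSets

variable {ι : Type u} {κ : Cardinal.{u}}

theorem Set.infinite_of_le_mk (hκ : ℵ₀ ≤ κ) {T : Set ι} (hT : κ ≤ #T) : T.Infinite :=
  infinite_coe_iff.1 (Cardinal.infinite_iff.2 (hκ.trans hT))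

theorem exists_subset_forall_eq_of_countable_image {α : Type u} (hκ : ℵ₀ < κ.ord.cof)
    {S : Set ι} (hS : κ ≤ #S) (f : ι → α) (hf : (f '' S).Countable) :
    ∃ c, ∃ T ⊆ S, κ ≤ #T ∧ ∀ a ∈ T, f a = c := by
  obtain ⟨⟨c, _⟩, T, hTS, hT, hfT⟩ := infinite_pigeonhole_set
    (fun a : S => (⟨f a, mem_image_of_mem f a.2⟩ : f '' S)) κ hS
    (hκ.le.trans (Ordinal.cof_ord_le κ)) (hf.le_aleph0.trans_lt hκ)
  exact ⟨c, T, hTS, hT, fun a ha => congrArg Subtype.val (hfT ha)⟩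

variable {J : Type u} [Finite J] (hκ : ℵ₀ < κ.ord.cof) {F : J → ι → Set ℕ}
include hκ

theorem exists_subset_forall_mem_gt (hinf : ∀ j a, (F j a).Infinite) {S : Set ι}
    (hS : κ ≤ #S) (N : J → ℕ) :
    ∃ c : J → ℕ, (∀ j, N j < c j) ∧ ∃ T ⊆ S, κ ≤ #T ∧ ∀ a ∈ T, ∀ j, c j ∈ F j a := by
  choose g hg using fun j a => (hinf j a).exists_gt (N j)
  obtain ⟨c, T, hTS, hT, hgT⟩ :=
    exists_subset_forall_eq_of_countable_image hκ hS (fun a j => g j a) (to_countable _)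
  obtain ⟨a, ha⟩ := (infinite_of_le_mk (hκ.le.trans (Ordinal.cof_ord_le κ)) hT).nonempty
  refine ⟨c, fun j => hgT a ha ▸ (hg j a).2, T, hTS, hT, fun b hb j => ?_⟩
  exact hgT b hb ▸ (hg j b).1

theorem exists_subset_forall_inter_eq
    (had : ∀ j a b, a ≠ b → (F j a ∩ F j b).Finite) (x : ι) {S : Set ι} (hS : κ ≤ #S) :
    ∃ G : J → Set ℕ, (∀ j, (G j).Finite) ∧
      ∃ T ⊆ S, κ ≤ #T ∧ ∀ a ∈ T, a ≠ x → ∀ j, F j x ∩ F j a = G j := by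
  set f : ι → J → Set ℕ := fun a j => F j x ∩ F j a
  have hf : (f '' S).Countable := by
    refine ((countable_pi fun _ => Countable.ofPred_finite).insert (f x)).mono ?_
    rintro _ ⟨a, -, rfl⟩
    by_cases hax : a = x
    · exact hax ▸ mem_insert _ _
    · exact mem_insert_of_mem _ fun j => had j x a (Ne.symm hax)
  obtain ⟨G, T, hTS, hT, hfT⟩ := exists_subset_forall_eq_of_countable_image hκ hS f hf
  obtain ⟨w, hw, hwx⟩ :=
    ((infinite_of_le_mk (hκ.le.trans (Ordinal.cof_ord_le κ)) hT).sdiff (finite_singleton x)).nonempty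
  refine ⟨G, fun j => hfT w hw ▸ had j x w (Ne.symm hwx), T, hTS, hT, fun a ha _ j => ?_⟩
  exact congrFun (hfT a ha) j

theorem exists_triple_inter_ssubset (hinf : ∀ j a, (F j a).Infinite)
    (had : ∀ j a b, a ≠ b → (F j a ∩ F j b).Finite) (hι : κ ≤ #ι) (n : ℕ) :
    ∃ x y z : ι, ∀ j, (∃ m ∈ F j x ∩ F j y, n < m) ∧ F j x ∩ F j y ⊂ F j x ∩ F j z := by
  have hκ₀ : ℵ₀ ≤ κ := hκ.le.trans (Ordinal.cof_ord_le κ)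
  obtain ⟨c, hcn, T₁, -, hT₁, hc⟩ := exists_subset_forall_mem_gt hκ hinf (by rwa [mk_univ]) fun _ => n
  obtain ⟨x, hx⟩ := (infinite_of_le_mk hκ₀ hT₁).nonempty
  obtain ⟨G, hG, T₂, hT₂₁, hT₂, hxG⟩ := exists_subset_forall_inter_eq hκ had x hT₁
  choose N hN using fun j => (hG j).bddAbove
  obtain ⟨d, hdN, T₃, hT₃₂, hT₃, hd⟩ := exists_subset_forall_mem_gt hκ hinf hT₂ N
  have hT₃inf := infinite_of_le_mk hκ₀ hT₃
  obtain ⟨y, hy, hyx⟩ := (hT₃inf.sdiff (finite_singleton x)).nonempty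
  obtain ⟨z, hz, hzxy⟩ := (hT₃inf.sdiff (toFinite {x, y})).nonempty
  have hyx : y ≠ x := hyx
  have hzx : z ≠ x := fun h => hzxy (.inl h)
  refine ⟨y, x, z, fun j => ⟨⟨c j, ⟨hc y (hT₂₁ (hT₃₂ hy)) j, hc x hx j⟩, hcn j⟩, ?_⟩⟩
  have hyG := hxG y (hT₃₂ hy) hyx j
  have hdx : d j ∉ F j x := fun hdx => (hdN j).not_ge (hN j (hyG ▸ ⟨hdx, hd y hy j⟩))
  exact inter_ssubset_inter_of_inter_eq (hyG.trans (hxG z (hT₃₂ hz) hzx j).symm)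
    ⟨hd y hy j, hd z hz j⟩ hdx

end LargeSets

theorem adFamily_triples_general (κ : Cardinal) (hcf : Cardinal.aleph0 < κ.ord.cof)
    (𝒜 ℬ : Set (Set ℕ)) (h𝒜 : ADFamily 𝒜) (hℬ : ADFamily ℬ)
    (hc𝒜 : Cardinal.mk ↥𝒜 = κ)
    (h : ↥𝒜 → ↥ℬ) (hbij : Function.Bijective h) :
    ∀ n : ℕ, ∃ x y z : ↥𝒜,
      (∃ m ∈ ((x : Set ℕ) ∩ (y : Set ℕ)), n < m) ∧
      ((x : Set ℕ) ∩ (y : Set ℕ)) ⊂ ((x : Set ℕ) ∩ (z : Set ℕ)) ∧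
      (∃ m ∈ ((h x : Set ℕ) ∩ (h y : Set ℕ)), n < m) ∧
      ((h x : Set ℕ) ∩ (h y : Set ℕ)) ⊂ ((h x : Set ℕ) ∩ (h z : Set ℕ)) := by
  intro n
  have hinj := hbij.injective
  obtain ⟨-, h𝒜inf, h𝒜ad⟩ := h𝒜
  obtain ⟨-, hℬinf, hℬad⟩ := hℬ
  obtain ⟨x, y, z, hxyz⟩ := exists_triple_inter_ssubset hcf
    (F := fun (b : Bool) (a : 𝒜) => bif b then (a : Set ℕ) else h a)
    (fun b a => by cases b; exacts [hℬinf _ (h a).2, h𝒜inf _ a.2])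
    (fun b a a' haa' => by
      cases b
      · exact hℬad _ (h a).2 _ (h a').2 fun e => haa' (hinj (Subtype.ext e))
      · exact h𝒜ad _ a.2 _ a'.2 fun e => haa' (Subtype.ext e))
    hc𝒜.ge n
  exact ⟨x, y, z, (hxyz true).1, (hxyz true).2, (hxyz false).1, (hxyz false).2⟩

/-- Lemma 6: for AD families 𝒜, ℬ of size κ with cf(κ) > ω and h : 𝒜 → ℬ a
bijection, for every n there are x, y, z ∈ 𝒜 with max(x ∩ y) > n,
x ∩ y ⊊ x ∩ z, max(h(x) ∩ h(y)) > n and h(x) ∩ h(y) ⊊ h(x) ∩ h(z). -/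
theorem adFamily_triples (κ : Cardinal) (hcf : Cardinal.aleph0 < κ.ord.cof)
    (𝒜 ℬ : Set (Set ℕ)) (h𝒜 : ADFamily 𝒜) (hℬ : ADFamily ℬ)
    (hc𝒜 : Cardinal.mk ↥𝒜 = κ) (hcℬ : Cardinal.mk ↥ℬ = κ)
    (h : ↥𝒜 → ↥ℬ) (hbij : Function.Bijective h) :
    ∀ n : ℕ, ∃ x y z : ↥𝒜,
      (∃ m ∈ ((x : Set ℕ) ∩ (y : Set ℕ)), n < m) ∧
      ((x : Set ℕ) ∩ (y : Set ℕ)) ⊂ ((x : Set ℕ) ∩ (z : Set ℕ)) ∧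
      (∃ m ∈ ((h x : Set ℕ) ∩ (h y : Set ℕ)), n < m) ∧
      ((h x : Set ℕ) ∩ (h y : Set ℕ)) ⊂ ((h x : Set ℕ) ∩ (h z : Set ℕ)) :=
  adFamily_triples_general κ hcf 𝒜 ℬ h𝒜 hℬ hc𝒜 h hbij
end

section
/- Let 𝒜 and ℬ be almost disjoint families on ω of size κ with cf(κ) > ω, and let h : 𝒜 → ℬ be a bijection of dense oscillation. Then there is no homeomorphism from Ψ(𝒜) to Ψ(ℬ) whose restriction to 𝒜 equals h. -/
open Set Cardinal

/-- A bijection h : 𝒜 → ℬ is of dense oscillation if for every 𝒜' ⊆ 𝒜 of size κ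
there are x, y, z ∈ 𝒜' with |(x ∩ z) \ (x ∩ y)| ≠ |(h(x) ∩ h(z)) \ (h(x) ∩ h(y))|. -/
def DenseOscillation {𝒜 ℬ : Set (Set ℕ)} (κ : Cardinal) (h : ↥𝒜 → ↥ℬ) : Prop :=
  ∀ 𝒜' : Set ↥𝒜, Cardinal.mk ↥𝒜' = κ →
    ∃ x ∈ 𝒜', ∃ y ∈ 𝒜', ∃ z ∈ 𝒜',
      Cardinal.mk ↥(((x : Set ℕ) ∩ (z : Set ℕ)) \ ((x : Set ℕ) ∩ (y : Set ℕ))) ≠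
      Cardinal.mk ↥(((h x : Set ℕ) ∩ (h z : Set ℕ)) \ ((h x : Set ℕ) ∩ (h y : Set ℕ)))

/-!
A homeomorphism `H : Ψ(𝒜) → Ψ(ℬ)` extending the bijection `h` must map `ω` onto `ω`, so it induces
a permutation `σ` of `ω`, and continuity of `H` and `H⁻¹` at the points of `𝒜` forces `σ[A]` and
`h(A)` to differ by finite sets. There are only countably many possible pairs of such finite
differences, so by `cf κ > ω` some `κ` members of `𝒜` share one pair. For any `x, y, z` among them,
`σ` maps `(x ∩ z) \ (x ∩ y)` bijectively onto `(h x ∩ h z) \ (h x ∩ h y)`, contradicting dense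
oscillation.
-/

open Topology

lemma Set.inter_sdiff_inter_eq_of_sdiff_eq {α : Type*} {X Y Z X' Y' Z' : Set α}
    (hY : Y \ Y' = X \ X') (hY' : Y' \ Y = X' \ X) (hZ : Z \ Z' = X \ X') (hZ' : Z' \ Z = X' \ X) :
    (X ∩ Z) \ (X ∩ Y) = (X' ∩ Z') \ (X' ∩ Y') := by
  ext a
  have hYa := congrArg (a ∈ ·) hY
  have hY'a := congrArg (a ∈ ·) hY'
  have hZa := congrArg (a ∈ ·) hZ
  have hZ'a := congrArg (a ∈ ·) hZ'
  simp only [mem_sdiff, mem_inter_iff, eq_iff_iff] at hYa hY'a hZa hZ'a ⊢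
  grind

lemma Equiv.exists_map_inl_of_map_inr {α β γ δ : Type*} (e : α ⊕ β ≃ γ ⊕ δ) {h : β → δ}
    (hh : Function.Surjective h) (he : ∀ b, e (.inr b) = .inr (h b)) :
    ∃ σ : α ≃ γ, ∀ a, e (.inl a) = .inl (σ a) := by
  have hinl (a : α) : ∃ c, e (.inl a) = .inl c := by
    rcases hea : e (.inl a) with c | d
    · exact ⟨c, rfl⟩
    · obtain ⟨b, rfl⟩ := hh d
      exact absurd (e.injective (hea.trans (he b).symm)) Sum.inl_ne_inr
  choose σ hσ using hinl
  refine ⟨Equiv.ofBijective σ ⟨fun a a' haa' => ?_, fun c => ?_⟩, hσ⟩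
  · exact Sum.inl_injective (e.injective (by rw [hσ, hσ, haa']))
  · obtain ⟨a | b, hab⟩ := e.surjective (.inl c)
    · exact ⟨a, Sum.inl_injective ((hσ a).symm.trans hab)⟩
    · exact absurd ((he b).symm.trans hab) Sum.inr_ne_inl

section PsiSpace

variable {𝒜 ℬ : Set (Set ℕ)}

lemma exists_finset_forall_inl_mem_of_isOpen {A : 𝒜} {U : Set (ℕ ⊕ 𝒜)}
    (hU : IsOpen[psiTop 𝒜] U) (hA : Sum.inr A ∈ U) :
    ∃ F : Finset ℕ, ∀ n ∈ (A : Set ℕ), n ∉ F → Sum.inl n ∈ U := by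
  induction hU with
  | basic V hV =>
    rcases hV with ⟨n, rfl⟩ | ⟨B, F, rfl⟩
    · simp at hA
    · obtain rfl : A = B := by simpa using hA
      exact ⟨F, fun n hn hnF => Or.inr ⟨n, ⟨hn, hnF⟩, rfl⟩⟩
  | univ => exact ⟨∅, fun _ _ _ => trivial⟩
  | inter U V _ _ ihU ihV =>
    obtain ⟨F, hF⟩ := ihU hA.1
    obtain ⟨G, hG⟩ := ihV hA.2
    refine ⟨F ∪ G, fun n hn hnFG => ?_⟩
    rw [Finset.mem_union, not_or] at hnFG
    exact ⟨hF n hn hnFG.1, hG n hn hnFG.2⟩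
  | sUnion S _ ih =>
    obtain ⟨V, hVS, hAV⟩ := hA
    obtain ⟨F, hF⟩ := ih V hVS hAV
    exact ⟨F, fun n hn hnF => ⟨V, hVS, hF n hn hnF⟩⟩

lemma finite_image_sdiff_of_continuous {f : ℕ ⊕ 𝒜 → ℕ ⊕ ℬ}
    (hf : Continuous[psiTop 𝒜, psiTop ℬ] f) {σ : ℕ → ℕ} (hσ : ∀ n, f (.inl n) = .inl (σ n))
    {A : 𝒜} {B : ℬ} (hAB : f (.inr A) = .inr B) :
    (σ '' A \ B).Finite := by
  have hU : IsOpen[psiTop ℬ] (insert (.inr B) (.inl '' (B : Set ℕ))) :=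
    TopologicalSpace.isOpen_generateFrom_of_mem (Or.inr ⟨B, ∅, by simp⟩)
  obtain ⟨F, hF⟩ := exists_finset_forall_inl_mem_of_isOpen (A := A)
    (@Continuous.isOpen_preimage _ _ (psiTop 𝒜) (psiTop ℬ) f hf _ hU) (by simp [hAB])
  refine (F.finite_toSet.image σ).subset ?_
  rintro _ ⟨⟨n, hnA, rfl⟩, hnB⟩
  by_contra hnF
  have hn := hF n hnA fun hn => hnF ⟨n, hn, rfl⟩
  exact hnB (by simpa [hσ] using hn)

lemma finite_image_sdiff_of_homeomorph
    (H : @Homeomorph (ℕ ⊕ 𝒜) (ℕ ⊕ ℬ) (psiTop 𝒜) (psiTop ℬ)) {σ : ℕ ≃ ℕ}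
    (hσ : ∀ n, H (.inl n) = .inl (σ n)) {A : 𝒜} {B : ℬ} (hAB : H (.inr A) = .inr B) :
    (σ '' A \ B).Finite ∧ ((B : Set ℕ) \ σ '' A).Finite := by
  let := psiTop 𝒜
  let := psiTop ℬ
  refine ⟨finite_image_sdiff_of_continuous H.continuous hσ hAB, ?_⟩
  have hσsymm (n : ℕ) : H.symm (.inl n) = .inl (σ.symm n) :=
    H.symm_apply_eq.mpr (by rw [hσ, σ.apply_symm_apply])
  have hsymm := finite_image_sdiff_of_continuous H.symm.continuous hσsymm
    (H.symm_apply_eq.mpr hAB.symm)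
  simpa [image_sdiff σ.injective] using hsymm.image σ

end PsiSpace

theorem no_homeomorph_extending_dense_oscillation_general (κ : Cardinal)
    (hcf : Cardinal.aleph0 < κ.ord.cof)
    (𝒜 ℬ : Set (Set ℕ))
    (hc𝒜 : Cardinal.mk ↥𝒜 = κ)
    (h : ↥𝒜 → ↥ℬ) (hbij : Function.Bijective h) (hdo : DenseOscillation κ h) :
    ¬ ∃ H : @Homeomorph (ℕ ⊕ ↥𝒜) (ℕ ⊕ ↥ℬ) (psiTop 𝒜) (psiTop ℬ),
        ∀ A : ↥𝒜, H (Sum.inr A) = Sum.inr (h A) := by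
  let := psiTop 𝒜
  let := psiTop ℬ
  rintro ⟨H, hH⟩
  obtain ⟨σ, hσ⟩ := H.toEquiv.exists_map_inl_of_map_inr hbij.2 hH
  have hfin (A : 𝒜) := finite_image_sdiff_of_homeomorph H hσ (hH A)
  let diffs (A : 𝒜) : Finset ℕ × Finset ℕ := ((hfin A).1.toFinset, (hfin A).2.toFinset)
  obtain ⟨d, hd⟩ := Cardinal.infinite_pigeonhole diffs
    (by rw [hc𝒜]; exact hcf.le.trans (Ordinal.cof_ord_le κ))
    (by rw [hc𝒜]; exact mk_le_aleph0.trans_lt hcf)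
  have hsame {A B : 𝒜} (hA : diffs A = d) (hB : diffs B = d) :
      σ '' A \ h A = σ '' B \ h B ∧ (h A : Set ℕ) \ σ '' A = (h B : Set ℕ) \ σ '' B := by
    simpa [diffs, Prod.ext_iff] using hA.trans hB.symm
  obtain ⟨x, hx, y, hy, z, hz, hne⟩ := hdo _ (hd.trans hc𝒜)
  apply hne
  rw [← mk_image_eq σ.injective, image_sdiff σ.injective, image_inter σ.injective,
    image_inter σ.injective, inter_sdiff_inter_eq_of_sdiff_eq (hsame hy hx).1 (hsame hy hx).2
      (hsame hz hx).1 (hsame hz hx).2]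

/-- Proposition 8: if h : 𝒜 → ℬ is a bijection of dense oscillation between AD
families of size κ with cf(κ) > ω, then no homeomorphism Ψ(𝒜) → Ψ(ℬ) extends h. -/
theorem no_homeomorph_extending_dense_oscillation (κ : Cardinal)
    (hcf : Cardinal.aleph0 < κ.ord.cof)
    (𝒜 ℬ : Set (Set ℕ)) (h𝒜 : ADFamily 𝒜) (hℬ : ADFamily ℬ)
    (hc𝒜 : Cardinal.mk ↥𝒜 = κ) (hcℬ : Cardinal.mk ↥ℬ = κ)
    (h : ↥𝒜 → ↥ℬ) (hbij : Function.Bijective h) (hdo : DenseOscillation κ h) :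
    ¬ ∃ H : @Homeomorph (ℕ ⊕ ↥𝒜) (ℕ ⊕ ↥ℬ) (psiTop 𝒜) (psiTop ℬ),
        ∀ A : ↥𝒜, H (Sum.inr A) = Sum.inr (h A) :=
  no_homeomorph_extending_dense_oscillation_general κ hcf 𝒜 ℬ hc𝒜 h hbij hdo
end

section
/- For every infinite set X ⊆ ω there exist two disjoint infinite sets A, B ⊆ X that are oscillating. -/
open Set

/-- Two sets A, B ⊆ ω are oscillating if no difference of two distinct elements
of A equals a difference of two distinct elements of B. -/
def Oscillating (A B : Set ℕ) : Prop :=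
  ∀ x ∈ A, ∀ y ∈ A, ∀ w ∈ B, ∀ z ∈ B, x ≠ y → w ≠ z →
    ((y : ℤ) - (x : ℤ)).natAbs ≠ ((z : ℤ) - (w : ℤ)).natAbs

/-- For every infinite X ⊆ ω there are two disjoint infinite oscillating subsets of X. -/
theorem exists_oscillating_subsets (X : Set ℕ) (hX : X.Infinite) :
    ∃ A B : Set ℕ, A ⊆ X ∧ B ⊆ X ∧ A.Infinite ∧ B.Infinite ∧
      Disjoint A B ∧ Oscillating A B := by
  have hex : ∀ n : ℕ, ∃ m, m ∈ X ∧ n < m := fun n => hX.exists_gt n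
  choose g hgX hglt using hex
  set f : ℕ → ℕ := fun n => Nat.rec (g 0) (fun _ p => g (2 * p)) n with hf
  have hmem : ∀ n, f n ∈ X := by
    intro n; cases n with
    | zero => exact hgX 0
    | succ m => exact hgX (2 * f m)
  have hgrow : ∀ n, 2 * f n < f (n + 1) := fun n => hglt (2 * f n)
  have hpos : ∀ n, 0 < f n := by
    intro n; cases n with
    | zero => exact hglt 0
    | succ m => exact lt_of_le_of_lt (Nat.zero_le _) (hgrow m)
  have hmono : StrictMono f := by
    apply strictMono_nat_of_lt_succ
    intro n
    calc f n ≤ 2 * f n := by omega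
      _ < f (n + 1) := hgrow n
  have key : ∀ a b c d : ℕ, a < b → c < d →
      (f b : ℤ) - f a = (f d : ℤ) - f c → a = c ∧ b = d := by
    have sep : ∀ k m : ℕ, k ≤ m → (f m : ℤ) < (f (m + 1) : ℤ) - f k := by
      intro k m hk
      have h1 := hgrow m
      have h2 : f k ≤ f m := hmono.monotone hk
      omega
    have half : ∀ a b c d : ℕ, a < b → c < d → b < d →
        (f b : ℤ) - f a ≠ (f d : ℤ) - f c := by
      intro a b c d hab hcd hbd h
      obtain ⟨e, rfl⟩ : ∃ e, d = e + 1 := ⟨d - 1, by omega⟩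
      have h1 := sep c e (by omega)
      have h2 : f b ≤ f e := hmono.monotone (by omega)
      have h3 := hpos a
      have h4 : (f a : ℤ) ≤ f b := by exact_mod_cast (hmono.monotone hab.le)
      push_cast at h1 ⊢
      omega
    intro a b c d hab hcd h
    rcases lt_trichotomy b d with hbd | hbd | hbd
    · exact absurd h (half a b c d hab hcd hbd)
    · subst hbd
      have : f a = f c := by omega
      exact ⟨hmono.injective this, rfl⟩
    · exact absurd h.symm (half c d a b hcd hab hbd)
  have keyN : ∀ a b c d : ℕ, a < b → c < d →
      ((f b : ℤ) - f a).natAbs = ((f d : ℤ) - f c).natAbs → a = c ∧ b = d := by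
    intro a b c d hab hcd h
    have h1 : (f a : ℤ) < f b := by exact_mod_cast hmono hab
    have h2 : (f c : ℤ) < f d := by exact_mod_cast hmono hcd
    exact key a b c d hab hcd (by omega)
  refine ⟨Set.range (fun n => f (2 * n)), Set.range (fun n => f (2 * n + 1)),
    ?_, ?_, ?_, ?_, ?_, ?_⟩
  · rintro x ⟨m, rfl⟩; exact hmem (2 * m)
  · rintro x ⟨m, rfl⟩; exact hmem (2 * m + 1)
  · exact Set.infinite_range_of_injective
      (fun m n h => by
        have := hmono.injective (a₁ := 2 * m) (a₂ := 2 * n) h; omega)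
  · exact Set.infinite_range_of_injective
      (fun m n h => by
        have := hmono.injective (a₁ := 2 * m + 1) (a₂ := 2 * n + 1) h; omega)
  · rw [Set.disjoint_left]
    rintro x ⟨m, rfl⟩ ⟨k, hk⟩
    have := hmono.injective (a₁ := 2 * m) (a₂ := 2 * k + 1) hk.symm
    omega
  · rintro x ⟨p, rfl⟩ y ⟨q, rfl⟩ w ⟨r, rfl⟩ z ⟨s, rfl⟩ hxy hwz h
    simp only at h hxy hwz
    have hpq : p ≠ q := fun e => hxy (by rw [e])
    have hrs : r ≠ s := fun e => hwz (by rw [e])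
    rcases hpq.lt_or_gt with hpq' | hpq' <;> rcases hrs.lt_or_gt with hrs' | hrs'
    · have := keyN (2 * p) (2 * q) (2 * r + 1) (2 * s + 1)
        (by omega) (by omega) h
      omega
    · rw [show ((f (2 * s + 1) : ℤ) - f (2 * r + 1)) =
        -((f (2 * r + 1) : ℤ) - f (2 * s + 1)) by ring, Int.natAbs_neg] at h
      have := keyN (2 * p) (2 * q) (2 * s + 1) (2 * r + 1)
        (by omega) (by omega) h
      omega
    · rw [show ((f (2 * q) : ℤ) - f (2 * p)) =
        -((f (2 * p) : ℤ) - f (2 * q)) by ring, Int.natAbs_neg] at h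
      have := keyN (2 * q) (2 * p) (2 * r + 1) (2 * s + 1)
        (by omega) (by omega) h
      omega
    · rw [show ((f (2 * q) : ℤ) - f (2 * p)) =
        -((f (2 * p) : ℤ) - f (2 * q)) by ring, Int.natAbs_neg,
        show ((f (2 * s + 1) : ℤ) - f (2 * r + 1)) =
        -((f (2 * r + 1) : ℤ) - f (2 * s + 1)) by ring, Int.natAbs_neg] at h
      have := keyN (2 * q) (2 * p) (2 * s + 1) (2 * r + 1)
        (by omega) (by omega) h
      omega
end

section
/- There exists a family of 𝔠 = 2^{ℵ₀} many infinite subsets of ω that are pairwise almost oscillating. -/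
/-!
Send `r : ℕ → Bool` to the set `P r` of codes of its finite prefixes. Two distinct branches share
only finitely many prefixes, so the `P r` form an almost disjoint family of `𝔠` infinite sets.
Since `|2 ^ q - 2 ^ p|` determines the pair `{p, q}`, sets of powers of two with disjoint
exponent sets oscillate, hence the sets `{2 ^ p | p ∈ P r}` are pairwise almost oscillating.
-/

open Set Cardinal

/-- A, B ⊆ ω are almost oscillating if A \ n and B \ n are oscillating for some n. -/
def AlmostOscillating (A B : Set ℕ) : Prop :=
  ∃ n : ℕ, Oscillating {a ∈ A | n ≤ a} {b ∈ B | n ≤ b}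

theorem Nat.eq_and_eq_of_pow_sub_pow_eq {b p q u v : ℕ} (hb : 2 ≤ b) (hpq : p < q) (huv : u < v)
    (h : b ^ q - b ^ p = b ^ v - b ^ u) : p = u ∧ q = v := by
  wlog hpu : p ≤ u generalizing p q u v
  · exact (this huv hpq h.symm (by omega)).imp Eq.symm Eq.symm
  have factor : ∀ {m n : ℕ}, m ≤ n → b ^ n - b ^ m = b ^ m * (b ^ (n - m) - 1) := fun hmn => by
    rw [Nat.mul_sub, ← pow_add, Nat.add_sub_cancel' hmn, mul_one]
  -- compare the largest powers of `b` dividing the two sides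
  obtain rfl : p = u := by
    refine hpu.eq_or_lt.resolve_right fun hpu => ?_
    have hcancel : b ^ (q - p) - 1 = b ^ (u - p) * (b ^ (v - u) - 1) := by
      rw [factor hpq.le, factor huv.le, ← pow_mul_pow_sub b hpu.le, mul_assoc] at h
      exact Nat.eq_of_mul_eq_mul_left (by positivity) h
    have hdvd : b ∣ b ^ (q - p) - (b ^ (q - p) - 1) :=
      Nat.dvd_sub (dvd_pow_self b (by omega))
        (hcancel ▸ (dvd_pow_self b (by omega)).mul_right _)
    have hpos : 0 < b ^ (q - p) := by positivity
    rw [Nat.sub_sub_self hpos] at hdvd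
    exact absurd (Nat.le_of_dvd one_pos hdvd) (by omega)
  have hqv : b ^ q = b ^ v := by
    have := Nat.pow_le_pow_right (by omega : 0 < b) hpq.le
    have := Nat.pow_le_pow_right (by omega : 0 < b) huv.le
    omega
  exact ⟨rfl, Nat.pow_right_injective hb hqv⟩

theorem oscillating_of_sub_ne {A B : Set ℕ}
    (h : ∀ x ∈ A, ∀ y ∈ A, ∀ w ∈ B, ∀ z ∈ B, x < y → w < z → y - x ≠ z - w) :
    Oscillating A B := by
  intro x hx y hy w hw z hz hxy hwz
  rcases hxy.lt_or_gt with hxy | hxy <;> rcases hwz.lt_or_gt with hwz | hwz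
  · have := h x hx y hy w hw z hz hxy hwz; omega
  · have := h x hx y hy z hz w hw hxy hwz; omega
  · have := h y hy x hx w hw z hz hxy hwz; omega
  · have := h y hy x hx z hz w hw hxy hwz; omega

theorem Oscillating.mono {A A' B B' : Set ℕ} (h : Oscillating A B) (hA : A' ⊆ A) (hB : B' ⊆ B) :
    Oscillating A' B' :=
  fun x hx y hy w hw z hz => h x (hA hx) y (hA hy) w (hB hw) z (hB hz)

theorem oscillating_pow_image {b : ℕ} (hb : 2 ≤ b) {P Q : Set ℕ} (hPQ : Disjoint P Q) :
    Oscillating ((b ^ ·) '' P) ((b ^ ·) '' Q) := by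
  refine oscillating_of_sub_ne ?_
  rintro _ ⟨p, hp, rfl⟩ _ ⟨q, -, rfl⟩ _ ⟨u, hu, rfl⟩ _ ⟨v, -, rfl⟩ hpq huv h
  have hb' : 1 < b := hb
  obtain ⟨rfl, -⟩ := Nat.eq_and_eq_of_pow_sub_pow_eq hb
    ((Nat.pow_lt_pow_iff_right hb').mp hpq) ((Nat.pow_lt_pow_iff_right hb').mp huv) h
  exact hPQ.ne_of_mem hp hu rfl

theorem almostOscillating_pow_image {b : ℕ} (hb : 2 ≤ b) {P Q : Set ℕ} (hPQ : (P ∩ Q).Finite) :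
    AlmostOscillating ((b ^ ·) '' P) ((b ^ ·) '' Q) := by
  obtain ⟨M, hM⟩ := hPQ.bddAbove
  have tail : ∀ {S : Set ℕ}, {a ∈ (b ^ ·) '' S | b ^ (M + 1) ≤ a} ⊆ (b ^ ·) '' {p ∈ S | M < p} := by
    rintro S _ ⟨⟨p, hp, rfl⟩, hle⟩
    exact ⟨p, ⟨hp, (Nat.pow_le_pow_iff_right hb).mp hle⟩, rfl⟩
  have hdisj : Disjoint {p ∈ P | M < p} {q ∈ Q | M < q} :=
    Set.disjoint_left.mpr fun p hp hq => (hM ⟨hp.1, hq.1⟩).not_gt hp.2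
  exact ⟨b ^ (M + 1), (oscillating_pow_image hb hdisj).mono tail tail⟩

def prefixCode (r : ℕ → Bool) (n : ℕ) : ℕ :=
  Encodable.encode ((List.range n).map r)

def prefixCodes (r : ℕ → Bool) : Set ℕ :=
  range (prefixCode r)

theorem eq_of_prefixCode_eq {r s : ℕ → Bool} {m n : ℕ} (h : prefixCode r m = prefixCode s n) :
    m = n ∧ ∀ i < m, r i = s i := by
  have hlist := Encodable.encode_injective h
  have hmn : m = n := by simpa using congrArg List.length hlist
  subst hmn
  refine ⟨rfl, fun i hi => ?_⟩
  simpa [hi] using congrArg (·[i]?) hlist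

theorem prefixCodes_infinite (r : ℕ → Bool) : (prefixCodes r).Infinite :=
  infinite_range_of_injective fun _ _ h => (eq_of_prefixCode_eq h).1

theorem prefixCodes_inter_finite {r s : ℕ → Bool} (hrs : r ≠ s) :
    (prefixCodes r ∩ prefixCodes s).Finite := by
  obtain ⟨k, hk⟩ := Function.ne_iff.mp hrs
  refine ((finite_Iic k).image (prefixCode r)).subset ?_
  rintro _ ⟨⟨m, rfl⟩, n, hn⟩
  obtain ⟨rfl, hagree⟩ := eq_of_prefixCode_eq hn.symm
  exact ⟨m, not_lt.mp fun hkm => hk (hagree k hkm), rfl⟩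

theorem prefixCodes_injective : Function.Injective prefixCodes := by
  intro r s h
  by_contra hrs
  have hfin := prefixCodes_inter_finite hrs
  rw [h, inter_self] at hfin
  exact prefixCodes_infinite s hfin

/-- Proposition 10: there are 𝔠 many infinite subsets of ω that are pairwise
almost oscillating. -/
theorem exists_continuum_almost_oscillating :
    ∃ 𝒮 : Set (Set ℕ), Cardinal.mk ↥𝒮 = Cardinal.continuum ∧
      (∀ A ∈ 𝒮, A.Infinite) ∧
      (∀ A ∈ 𝒮, ∀ B ∈ 𝒮, A ≠ B → AlmostOscillating A B) := by
  have hpow : Function.Injective (2 ^ · : ℕ → ℕ) := Nat.pow_right_injective le_rfl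
  refine ⟨range (image (2 ^ ·) ∘ prefixCodes), ?_, ?_, ?_⟩
  · rw [mk_range_eq _ ((image_injective.mpr hpow).comp prefixCodes_injective)]
    simp
  · rintro _ ⟨r, rfl⟩
    exact (prefixCodes_infinite r).image hpow.injOn
  · rintro _ ⟨r, rfl⟩ _ ⟨s, rfl⟩ hne
    exact almostOscillating_pow_image le_rfl (prefixCodes_inter_finite fun hrs => hne (congrArg _ hrs))
end

section
/- Let 𝒜 and ℬ be almost disjoint families on ω of size κ with cf(κ) > ω, and let h : 𝒜 → ℬ be a bijection. If the sets {|x ∩ y| : x, y ∈ 𝒜, x ≠ y} and {|x ∩ y| : x, y ∈ ℬ, x ≠ y} of natural numbers are almost oscillating, then there exists 𝒜' ⊆ 𝒜 of size κ such that the restriction h↾𝒜' : 𝒜' → h[𝒜'] is of dense oscillation. -/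
open Set Cardinal

/-- The set {|x ∩ y| : x, y ∈ 𝒜, x ≠ y} of intersection sizes of an AD family. -/
def interSizes (𝒜 : Set (Set ℕ)) : Set ℕ :=
  {m | ∃ x ∈ 𝒜, ∃ y ∈ 𝒜, x ≠ y ∧ m = Nat.card ↥(x ∩ y)}

/-- In an uncountable subfamily of an AD family, for every `N` there is a pair
whose intersection has at least `N` elements. -/
lemma exists_pair_large_inter (𝒜 : Set (Set ℕ)) (hinf : ∀ A ∈ 𝒜, A.Infinite)
    (hAD : ∀ A ∈ 𝒜, ∀ B ∈ 𝒜, A ≠ B → (A ∩ B).Finite)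
    (S : Set ↥𝒜) (hS : Cardinal.aleph0 < Cardinal.mk ↥S) (N : ℕ) :
    ∃ x ∈ S, ∃ y ∈ S, x ≠ y ∧ N ≤ (((x : Set ℕ)) ∩ ((y : Set ℕ))).ncard := by
  by_contra hcon
  push_neg at hcon
  have hinjF : Function.Injective
      (fun (x : ↥S) (i : Fin N) => Nat.nth (· ∈ ((x : ↥𝒜) : Set ℕ)) i) := by
    intro x y hxy
    by_contra hne
    have hxyA : (x : ↥𝒜) ≠ (y : ↥𝒜) := fun e => hne (Subtype.ext e)
    have hsets : ((x : ↥𝒜) : Set ℕ) ≠ ((y : ↥𝒜) : Set ℕ) := fun e => hxyA (Subtype.ext e)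
    have hXinf : {n | n ∈ ((x : ↥𝒜) : Set ℕ)}.Infinite := hinf _ (x : ↥𝒜).2
    have hfin : (((x : ↥𝒜) : Set ℕ) ∩ ((y : ↥𝒜) : Set ℕ)).Finite :=
      hAD _ (x : ↥𝒜).2 _ (y : ↥𝒜).2 hsets
    set p : ℕ → Prop := (· ∈ ((x : ↥𝒜) : Set ℕ)) with hp
    have hinj2 : Function.Injective (fun i : Fin N => Nat.nth p i) := by
      intro i j hij
      exact Fin.ext (Nat.nth_injective hXinf hij)
    set T : Finset ℕ := Finset.image (fun i : Fin N => Nat.nth p i) Finset.univ with hT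
    have hTcard : T.card = N := by
      rw [hT, Finset.card_image_of_injective _ hinj2, Finset.card_univ, Fintype.card_fin]
    have hTsub : ↑T ⊆ ((x : ↥𝒜) : Set ℕ) ∩ ((y : ↥𝒜) : Set ℕ) := by
      intro a ha
      rw [hT] at ha
      simp only [Finset.coe_image, Finset.coe_univ, Set.image_univ, Set.mem_range] at ha
      obtain ⟨i, rfl⟩ := ha
      constructor
      · exact Nat.nth_mem_of_infinite hXinf i
      · have hcf := congrFun hxy i
        simp only at hcf
        rw [hp, hcf]
        exact Nat.nth_mem_of_infinite (hinf _ (y : ↥𝒜).2) i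
    have hN : N ≤ (((x : ↥𝒜) : Set ℕ) ∩ ((y : ↥𝒜) : Set ℕ)).ncard := by
      calc N = (↑T : Set ℕ).ncard := by rw [Set.ncard_coe_finset, hTcard]
        _ ≤ _ := Set.ncard_le_ncard hTsub hfin
    exact absurd hN (not_le.mpr (hcon (x : ↥𝒜) x.2 (y : ↥𝒜) y.2 hxyA))
  have h1 : Cardinal.mk ↥S ≤ Cardinal.mk (Fin N → ℕ) := Cardinal.mk_le_of_injective hinjF
  have h2 : Cardinal.mk (Fin N → ℕ) ≤ Cardinal.aleph0 := Cardinal.mk_le_aleph0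
  exact absurd (h1.trans h2) (not_le.mpr hS)

/-- Corollary 11: if h : 𝒜 → ℬ is a bijection between AD families of size κ with
cf(κ) > ω and the sets of intersection sizes of 𝒜 and ℬ are almost oscillating,
then there is 𝒜' ⊆ 𝒜 of size κ on which the restriction h↾𝒜' : 𝒜' → h[𝒜'] is of
dense oscillation. -/
theorem exists_dense_oscillation_restriction (κ : Cardinal)
    (hcf : Cardinal.aleph0 < κ.ord.cof)
    (𝒜 ℬ : Set (Set ℕ)) (h𝒜 : ADFamily 𝒜) (hℬ : ADFamily ℬ)
    (hc𝒜 : Cardinal.mk ↥𝒜 = κ) (hcℬ : Cardinal.mk ↥ℬ = κ)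
    (h : ↥𝒜 → ↥ℬ) (hbij : Function.Bijective h)
    (hosc : AlmostOscillating (interSizes 𝒜) (interSizes ℬ)) :
    ∃ 𝒜' : Set ↥𝒜, Cardinal.mk ↥𝒜' = κ ∧
      ∀ 𝒜'' ⊆ 𝒜', Cardinal.mk ↥𝒜'' = κ →
        ∃ x ∈ 𝒜'', ∃ y ∈ 𝒜'', ∃ z ∈ 𝒜'',
          Cardinal.mk ↥(((x : Set ℕ) ∩ (z : Set ℕ)) \ ((x : Set ℕ) ∩ (y : Set ℕ))) ≠
          Cardinal.mk ↥(((h x : Set ℕ) ∩ (h z : Set ℕ)) \ ((h x : Set ℕ) ∩ (h y : Set ℕ))) := by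
  obtain ⟨h𝒜inf, h𝒜mem, hAD⟩ := h𝒜
  obtain ⟨hℬinf, hℬmem, hBD⟩ := hℬ
  have hinj := hbij.1
  have hκ : Cardinal.aleph0 < κ := lt_of_lt_of_le hcf (Ordinal.cof_ord_le κ)
  refine ⟨Set.univ, by rw [Cardinal.mk_univ, hc𝒜], ?_⟩
  intro S _ hScard
  by_contra hcon
  push_neg at hcon
  -- hcon : ∀ x ∈ S, ∀ y ∈ S, ∀ z ∈ S, mk _ = mk _
  obtain ⟨n, hoscn⟩ := hosc
  have hScard' : Cardinal.aleph0 < Cardinal.mk ↥S := by rw [hScard]; exact hκ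
  have hSinf : S.Infinite := by
    rw [← Set.infinite_coe_iff]
    exact Cardinal.infinite_iff.mpr hScard'.le
  -- basic facts about pairs
  have hfinA : ∀ x y : ↥𝒜, x ≠ y → ((x : Set ℕ) ∩ (y : Set ℕ)).Finite := by
    intro x y hxy
    exact hAD _ x.2 _ y.2 (fun e => hxy (Subtype.ext e))
  have hfinB : ∀ x y : ↥𝒜, x ≠ y →
      (((h x) : Set ℕ) ∩ ((h y) : Set ℕ)).Finite := by
    intro x y hxy
    exact hBD _ (h x).2 _ (h y).2
      (fun e => hxy (hinj (Subtype.ext e)))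
  -- the ncard version of the contradiction hypothesis
  have hcon' : ∀ x ∈ S, ∀ y ∈ S, ∀ z ∈ S,
      (((x : Set ℕ) ∩ (z : Set ℕ)) \ ((x : Set ℕ) ∩ (y : Set ℕ))).ncard =
      ((((h x) : Set ℕ) ∩ ((h z) : Set ℕ)) \ (((h x) : Set ℕ) ∩ ((h y) : Set ℕ))).ncard := by
    intro x hx y hy z hz
    rw [← Nat.card_coe_set_eq, ← Nat.card_coe_set_eq]
    exact congrArg Cardinal.toNat (hcon x hx y hy z hz)
  -- the key integer identity for pairwise distinct triples
  have key : ∀ x ∈ S, ∀ y ∈ S, ∀ z ∈ S, x ≠ y → x ≠ z → y ≠ z →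
      (((x : Set ℕ) ∩ (z : Set ℕ)).ncard : ℤ) - (((x : Set ℕ) ∩ (y : Set ℕ)).ncard : ℤ) =
      ((((h x) : Set ℕ) ∩ ((h z) : Set ℕ)).ncard : ℤ) -
        ((((h x) : Set ℕ) ∩ ((h y) : Set ℕ)).ncard : ℤ) := by
    intro x hx y hy z hz hxy hxz _
    have E1 := hcon' x hx y hy z hz
    have E2 := hcon' x hx z hz y hy
    have i1 := Set.ncard_inter_add_ncard_diff_eq_ncard
      ((x : Set ℕ) ∩ (z : Set ℕ)) ((x : Set ℕ) ∩ (y : Set ℕ)) (hfinA x z hxz)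
    have i2 := Set.ncard_inter_add_ncard_diff_eq_ncard
      ((x : Set ℕ) ∩ (y : Set ℕ)) ((x : Set ℕ) ∩ (z : Set ℕ)) (hfinA x y hxy)
    have i1' := Set.ncard_inter_add_ncard_diff_eq_ncard
      (((h x) : Set ℕ) ∩ ((h z) : Set ℕ)) (((h x) : Set ℕ) ∩ ((h y) : Set ℕ)) (hfinB x z hxz)
    have i2' := Set.ncard_inter_add_ncard_diff_eq_ncard
      (((h x) : Set ℕ) ∩ ((h y) : Set ℕ)) (((h x) : Set ℕ) ∩ ((h z) : Set ℕ)) (hfinB x y hxy)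
    rw [Set.inter_comm ((x : Set ℕ) ∩ (y : Set ℕ)) ((x : Set ℕ) ∩ (z : Set ℕ))] at i2
    rw [Set.inter_comm (((h x) : Set ℕ) ∩ ((h y) : Set ℕ))
      (((h x) : Set ℕ) ∩ ((h z) : Set ℕ))] at i2'
    omega
  -- the difference function is constant on pairs of distinct elements
  set g : ↥𝒜 → ↥𝒜 → ℤ := fun a b =>
    (((a : Set ℕ) ∩ (b : Set ℕ)).ncard : ℤ) - ((((h a) : Set ℕ) ∩ ((h b) : Set ℕ)).ncard : ℤ)
    with hg
  have gsymm : ∀ a b : ↥𝒜, g a b = g b a := by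
    intro a b
    simp only [hg, Set.inter_comm]
  have gkey : ∀ x ∈ S, ∀ y ∈ S, ∀ z ∈ S, x ≠ y → x ≠ z → y ≠ z → g x y = g x z := by
    intro x hx y hy z hz hxy hxz hyz
    have := key x hx y hy z hz hxy hxz hyz
    simp only [hg]
    omega
  have gconst : ∀ x ∈ S, ∀ y ∈ S, ∀ u ∈ S, ∀ v ∈ S, x ≠ y → u ≠ v → g x y = g u v := by
    intro x hx y hy u hu v hv hxy huv
    obtain ⟨w, hwS, hwne⟩ : ∃ w, w ∈ S ∧ w ∉ ({x, y, u, v} : Set ↥𝒜) := by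
      obtain ⟨w, hw⟩ := (hSinf.diff (Set.toFinite ({x, y, u, v} : Set ↥𝒜))).nonempty
      exact ⟨w, hw.1, hw.2⟩
    simp only [Set.mem_insert_iff, Set.mem_singleton_iff, not_or] at hwne
    obtain ⟨hwx, hwy, hwu, hwv⟩ := hwne
    have e1 : g x y = g x w := gkey x hx y hy w hwS hxy (Ne.symm hwx) (Ne.symm hwy)
    have e2 : g x w = g w u := by
      rw [gsymm x w]
      rcases eq_or_ne x u with rfl | hxu
      · rfl
      · exact gkey w hwS x hx u hu hwx hwu hxu
    have e3 : g w u = g u v := by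
      rw [gsymm w u]
      exact gkey u hu w hwS v hv (Ne.symm hwu) huv hwv
    rw [e1, e2, e3]
  -- base pair, to fix the constant
  obtain ⟨x0, hx0⟩ := hSinf.nonempty
  obtain ⟨y0, hy0'⟩ := (hSinf.diff (Set.toFinite ({x0} : Set ↥𝒜))).nonempty
  have hy0 : y0 ∈ S := hy0'.1
  have hxy0 : x0 ≠ y0 := fun e => hy0'.2 (by simp [← e])
  set c : ℤ := g x0 y0 with hc
  have hcle : c ≤ (c.toNat : ℤ) := Int.self_le_toNat c
  -- two pairs with large, distinct intersection sizes
  obtain ⟨x1, hx1, y1, hy1, hne1, hbig1⟩ :=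
    exists_pair_large_inter 𝒜 h𝒜mem hAD S hScard' (n + c.toNat)
  obtain ⟨x2, hx2, y2, hy2, hne2, hbig2⟩ :=
    exists_pair_large_inter 𝒜 h𝒜mem hAD S hScard'
      (((x1 : Set ℕ) ∩ (y1 : Set ℕ)).ncard + 1)
  set s1 := ((x1 : Set ℕ) ∩ (y1 : Set ℕ)).ncard with hs1
  set s2 := ((x2 : Set ℕ) ∩ (y2 : Set ℕ)).ncard with hs2
  set t1 := (((h x1) : Set ℕ) ∩ ((h y1) : Set ℕ)).ncard with ht1
  set t2 := (((h x2) : Set ℕ) ∩ ((h y2) : Set ℕ)).ncard with ht2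
  have hg1 : (s1 : ℤ) - t1 = c := gconst x1 hx1 y1 hy1 x0 hx0 y0 hy0 hne1 hxy0
  have hg2 : (s2 : ℤ) - t2 = c := gconst x2 hx2 y2 hy2 x0 hx0 y0 hy0 hne2 hxy0
  -- memberships
  have hsets1 : (x1 : Set ℕ) ≠ (y1 : Set ℕ) := fun e => hne1 (Subtype.ext e)
  have hsets2 : (x2 : Set ℕ) ≠ (y2 : Set ℕ) := fun e => hne2 (Subtype.ext e)
  have hsetsB1 : ((h x1) : Set ℕ) ≠ ((h y1) : Set ℕ) :=
    fun e => hne1 (hinj (Subtype.ext e))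
  have hsetsB2 : ((h x2) : Set ℕ) ≠ ((h y2) : Set ℕ) :=
    fun e => hne2 (hinj (Subtype.ext e))
  have hm1 : s1 ∈ interSizes 𝒜 :=
    ⟨_, x1.2, _, y1.2, hsets1, (Nat.card_coe_set_eq _).symm⟩
  have hm2 : s2 ∈ interSizes 𝒜 :=
    ⟨_, x2.2, _, y2.2, hsets2, (Nat.card_coe_set_eq _).symm⟩
  have hm1' : t1 ∈ interSizes ℬ :=
    ⟨_, (h x1).2, _, (h y1).2, hsetsB1, (Nat.card_coe_set_eq _).symm⟩
  have hm2' : t2 ∈ interSizes ℬ :=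
    ⟨_, (h x2).2, _, (h y2).2, hsetsB2, (Nat.card_coe_set_eq _).symm⟩
  have habs := hoscn s1 ⟨hm1, by omega⟩ s2 ⟨hm2, by omega⟩ t1 ⟨hm1', by omega⟩
    t2 ⟨hm2', by omega⟩ (by omega) (by omega)
  exact habs (by rw [show (s2 : ℤ) - s1 = (t2 : ℤ) - t1 by omega])
end

section
/- Let 𝒜 and ℬ be almost disjoint families on ω of size κ with cf(κ) > ω, and let h : 𝒜 → ℬ be a bijection. If the sets {|x ∩ y| : x, y ∈ 𝒜, x ≠ y} and {|x ∩ y| : x, y ∈ ℬ, x ≠ y} are almost oscillating, then there is no homeomorphism from Ψ(𝒜) to Ψ(ℬ) whose restriction to 𝒜 equals h. -/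
open Set Cardinal

/-- Auxiliary: the size of the intersection of a pair from a family. -/
noncomputable def pairCard (𝒜 : Set (Set ℕ)) (p : ↥𝒜 × ↥𝒜) : ℕ :=
  ((p.1 : Set ℕ) ∩ ↑p.2).ncard

/-- In the Ψ-space topology, every open set containing the point `Sum.inr B`
contains `Sum.inl m` for all but finitely many `m ∈ B`. -/
lemma psi_cluster {𝒜 : Set (Set ℕ)} {U : Set (ℕ ⊕ ↥𝒜)}
    (hU : TopologicalSpace.GenerateOpen
      ({U | ∃ n : ℕ, U = {Sum.inl n}} ∪
       {U | ∃ (A : ↥𝒜) (F : Finset ℕ),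
          U = insert (Sum.inr A) (Sum.inl '' ((A : Set ℕ) \ ↑F))}) U)
    {B : ↥𝒜} (hB : Sum.inr B ∈ U) :
    {m | m ∈ (B : Set ℕ) ∧ Sum.inl m ∉ U}.Finite := by
  induction hU with
  | basic V hV =>
      rcases hV with ⟨n, rfl⟩ | ⟨A, F, rfl⟩
      · simp at hB
      · have hBA : B = A := by
          rcases hB with hb | hb
          · exact Sum.inr.inj hb
          · rcases hb with ⟨m, _, hm⟩; simp at hm
        subst hBA
        apply F.finite_toSet.subset
        rintro m ⟨hmB, hmU⟩
        by_contra hmF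
        exact hmU (Or.inr ⟨m, ⟨hmB, hmF⟩, rfl⟩)
  | univ => simp
  | inter U V _ _ ihU ihV =>
      refine ((ihU hB.1).union (ihV hB.2)).subset ?_
      rintro m ⟨hm, hnm⟩
      by_cases h1 : Sum.inl m ∈ U
      · exact Or.inr ⟨hm, fun hc => hnm ⟨h1, hc⟩⟩
      · exact Or.inl ⟨hm, h1⟩
  | sUnion S _ ih =>
      rcases hB with ⟨V, hVS, hBV⟩
      refine (ih V hVS hBV).subset ?_
      rintro m ⟨hm, h2⟩
      exact ⟨hm, fun hc => h2 ⟨V, hVS, hc⟩⟩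

/-- An uncountable subfamily of an AD family has unbounded intersection sizes. -/
lemma ad_unbounded {𝒜 : Set (Set ℕ)} (hinf : ∀ A ∈ 𝒜, A.Infinite)
    (had : ∀ A ∈ 𝒜, ∀ B ∈ 𝒜, A ≠ B → (A ∩ B).Finite)
    {s : Set ↥𝒜} (hs : ¬ s.Countable) (N : ℕ) :
    ∃ A ∈ s, ∃ A' ∈ s, A ≠ A' ∧ N ≤ ((A : Set ℕ) ∩ ↑A').ncard := by
  by_contra hcon
  push_neg at hcon
  apply hs
  have hAinf : ∀ A : ↥𝒜, {x | x ∈ (A : Set ℕ)}.Infinite := fun A => by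
    simpa using hinf A A.2
  set F : ↥𝒜 → (Fin N → ℕ) := fun A i => Nat.nth (· ∈ (A : Set ℕ)) i with hF
  have hinj : ∀ A ∈ s, ∀ A' ∈ s, F A = F A' → A = A' := by
    intro A hA A' hA' hFF
    by_contra hne
    have hlt := hcon A hA A' hA' hne
    have hfin : ((A : Set ℕ) ∩ ↑A').Finite :=
      had A A.2 A' A'.2 (fun hc => hne (Subtype.ext hc))
    have hsub : Set.range (fun i : Fin N => Nat.nth (· ∈ (A : Set ℕ)) i)
        ⊆ (A : Set ℕ) ∩ ↑A' := by
      rintro x ⟨i, rfl⟩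
      refine ⟨Nat.nth_mem_of_infinite (hAinf A) i, ?_⟩
      have heq := congrFun hFF i
      simp only [hF] at heq
      show Nat.nth (· ∈ (A : Set ℕ)) i ∈ (A' : Set ℕ)
      rw [heq]
      exact Nat.nth_mem_of_infinite (hAinf A') i
    have hrinj : Function.Injective (fun i : Fin N => Nat.nth (· ∈ (A : Set ℕ)) i) :=
      fun i j hij => Fin.val_injective (Nat.nth_injective (hAinf A) hij)
    have hcard : (Set.range (fun i : Fin N => Nat.nth (· ∈ (A : Set ℕ)) i)).ncard = N := by
      rw [← Set.image_univ, Set.ncard_image_of_injective _ hrinj, Set.ncard_univ]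
      simp
    have := Set.ncard_le_ncard hsub hfin
    omega
  rw [← Set.countable_coe_iff]
  have : Function.Injective (fun x : ↥s => F x.1) := by
    intro x y hxy
    exact Subtype.ext (hinj x.1 x.2 y.1 y.2 hxy)
  exact this.countable

/-- Corollary 12: if h : 𝒜 → ℬ is a bijection between AD families of size κ with
cf(κ) > ω and the sets of intersection sizes of 𝒜 and ℬ are almost oscillating,
then no homeomorphism Ψ(𝒜) → Ψ(ℬ) extends h. -/
theorem no_homeomorph_extending_of_almost_oscillating (κ : Cardinal)
    (hcf : Cardinal.aleph0 < κ.ord.cof)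
    (𝒜 ℬ : Set (Set ℕ)) (h𝒜 : ADFamily 𝒜) (hℬ : ADFamily ℬ)
    (hc𝒜 : Cardinal.mk ↥𝒜 = κ) (hcℬ : Cardinal.mk ↥ℬ = κ)
    (h : ↥𝒜 → ↥ℬ) (hbij : Function.Bijective h)
    (hosc : AlmostOscillating (interSizes 𝒜) (interSizes ℬ)) :
    ¬ ∃ H : @Homeomorph (ℕ ⊕ ↥𝒜) (ℕ ⊕ ↥ℬ) (psiTop 𝒜) (psiTop ℬ),
        ∀ A : ↥𝒜, H (Sum.inr A) = Sum.inr (h A) := by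
  rintro ⟨H, hH⟩
  obtain ⟨hinf𝒜, hA_inf, hAD⟩ := h𝒜
  obtain ⟨hinfℬ, hB_inf, hBD⟩ := hℬ
  obtain ⟨n, hoscn⟩ := hosc
  letI tA : TopologicalSpace (ℕ ⊕ ↥𝒜) := psiTop 𝒜
  letI tB : TopologicalSpace (ℕ ⊕ ↥ℬ) := psiTop ℬ
  -- basic open sets
  have genA : ∀ (A : ↥𝒜) (F : Finset ℕ),
      IsOpen (insert (Sum.inr A) (Sum.inl '' ((A : Set ℕ) \ ↑F)) : Set (ℕ ⊕ ↥𝒜)) :=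
    fun A F => TopologicalSpace.GenerateOpen.basic _ (Or.inr ⟨A, F, rfl⟩)
  have genB : ∀ (B : ↥ℬ) (F : Finset ℕ),
      IsOpen (insert (Sum.inr B) (Sum.inl '' ((B : Set ℕ) \ ↑F)) : Set (ℕ ⊕ ↥ℬ)) :=
    fun B F => TopologicalSpace.GenerateOpen.basic _ (Or.inr ⟨B, F, rfl⟩)
  have singA : ∀ k : ℕ, IsOpen ({Sum.inl k} : Set (ℕ ⊕ ↥𝒜)) :=
    fun k => TopologicalSpace.GenerateOpen.basic _ (Or.inl ⟨k, rfl⟩)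
  have singB : ∀ k : ℕ, IsOpen ({Sum.inl k} : Set (ℕ ⊕ ↥ℬ)) :=
    fun k => TopologicalSpace.GenerateOpen.basic _ (Or.inl ⟨k, rfl⟩)
  -- H maps ℕ into ℕ
  have keyf : ∀ k : ℕ, ∃ m, H (Sum.inl k) = Sum.inl m := by
    intro k
    cases hx : H (Sum.inl k) with
    | inl m => exact ⟨m, rfl⟩
    | inr B =>
      exfalso
      have hopen : IsOpen ({Sum.inr B} : Set (ℕ ⊕ ↥ℬ)) := by
        have := H.isOpen_image.mpr (singA k)
        rwa [Set.image_singleton, hx] at this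
      have hfin := psi_cluster (𝒜 := ℬ) hopen (Set.mem_singleton _)
      exact hB_inf B B.2 (hfin.subset (fun m hm => ⟨hm, by simp⟩))
  have keyb : ∀ m : ℕ, ∃ k, H.symm (Sum.inl m) = Sum.inl k := by
    intro m
    cases hx : H.symm (Sum.inl m) with
    | inl k => exact ⟨k, rfl⟩
    | inr A =>
      exfalso
      have hopen : IsOpen ({Sum.inr A} : Set (ℕ ⊕ ↥𝒜)) := by
        have := H.symm.isOpen_image.mpr (singB m)
        rwa [Set.image_singleton, hx] at this
      have hfin := psi_cluster (𝒜 := 𝒜) hopen (Set.mem_singleton _)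
      exact hA_inf A A.2 (hfin.subset (fun a ha => ⟨ha, by simp⟩))
  choose σ hσ using keyf
  choose τ hτ using keyb
  have hστ : ∀ m, σ (τ m) = m := by
    intro m
    have h1 : H (Sum.inl (τ m)) = Sum.inl m := by
      rw [← hτ m, Homeomorph.apply_symm_apply]
    exact Sum.inl.inj ((hσ (τ m)).symm.trans h1)
  have hτσ : ∀ k, τ (σ k) = k := by
    intro k
    have h1 : H.symm (Sum.inl (σ k)) = Sum.inl k := by
      rw [← hσ k, Homeomorph.symm_apply_apply]
    exact Sum.inl.inj ((hτ (σ k)).symm.trans h1)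
  have hσinj : Function.Injective σ := Function.LeftInverse.injective hτσ
  -- convergence of σ along each A to h A, and of τ along h A to A
  have conv1 : ∀ A : ↥𝒜, {a | a ∈ (A : Set ℕ) ∧ σ a ∉ ((h A : Set ℕ))}.Finite := by
    intro A
    have hUopen := genB (h A) ∅
    have hpre := H.isOpen_preimage.mpr hUopen
    have hmem : Sum.inr A ∈
        H ⁻¹' (insert (Sum.inr (h A)) (Sum.inl '' ((h A : Set ℕ) \ ↑(∅ : Finset ℕ)))) := by
      rw [Set.mem_preimage, hH A]
      exact Set.mem_insert _ _
    have hfin := psi_cluster (𝒜 := 𝒜) hpre hmem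
    refine hfin.subset ?_
    rintro a ⟨haA, hab⟩
    refine ⟨haA, fun hc => hab ?_⟩
    have hmem2 : H (Sum.inl a) ∈
        insert (Sum.inr (h A)) (Sum.inl '' ((h A : Set ℕ) \ ↑(∅ : Finset ℕ))) := hc
    rw [hσ a] at hmem2
    rcases hmem2 with h1 | h1
    · exact absurd h1 (by simp)
    · obtain ⟨b, hb, hbe⟩ := h1
      cases Sum.inl.inj hbe
      exact hb.1
  have conv2 : ∀ A : ↥𝒜, {b | b ∈ ((h A : Set ℕ)) ∧ τ b ∉ (A : Set ℕ)}.Finite := by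
    intro A
    have hUopen := genA A ∅
    have hpre := H.symm.isOpen_preimage.mpr hUopen
    have hmem : Sum.inr (h A) ∈
        H.symm ⁻¹' (insert (Sum.inr A) (Sum.inl '' ((A : Set ℕ) \ ↑(∅ : Finset ℕ)))) := by
      rw [Set.mem_preimage, ← hH A, Homeomorph.symm_apply_apply]
      exact Set.mem_insert _ _
    have hfin := psi_cluster (𝒜 := ℬ) hpre hmem
    refine hfin.subset ?_
    rintro b ⟨hbB, hbt⟩
    refine ⟨hbB, fun hc => hbt ?_⟩
    have hmem2 : H.symm (Sum.inl b) ∈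
        insert (Sum.inr A) (Sum.inl '' ((A : Set ℕ) \ ↑(∅ : Finset ℕ))) := hc
    rw [hτ b] at hmem2
    rcases hmem2 with h1 | h1
    · exact absurd h1 (by simp)
    · obtain ⟨a, ha, hae⟩ := h1
      cases Sum.inl.inj hae
      exact ha.1
  -- error terms
  let S1 : ↥𝒜 → Set ℕ := fun A => {a | a ∈ (A : Set ℕ) ∧ σ a ∉ ((h A : Set ℕ))}
  let S2 : ↥𝒜 → Set ℕ := fun A => {b | b ∈ ((h A : Set ℕ)) ∧ τ b ∉ (A : Set ℕ)}
  let D : ↥𝒜 → ℕ := fun A => (S1 A).ncard + (S2 A).ncard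
  -- key cardinality comparison
  have keyineq : ∀ A A' : ↥𝒜, A ≠ A' →
      pairCard ℬ (h A, h A') ≤ pairCard 𝒜 (A, A') + D A + D A' ∧
      pairCard 𝒜 (A, A') ≤ pairCard ℬ (h A, h A') + D A + D A' := by
    intro A A' hne
    have hneB : h A ≠ h A' := fun hc => hne (hbij.1 hc)
    have hfinA : ((A : Set ℕ) ∩ ↑A').Finite :=
      hAD A A.2 A' A'.2 (fun hc => hne (Subtype.ext hc))
    have hfinB : ((h A : Set ℕ) ∩ ↑(h A')).Finite :=
      hBD _ (h A).2 _ (h A').2 (fun hc => hneB (Subtype.ext hc))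
    have himg : (σ '' ((A : Set ℕ) ∩ ↑A')).ncard = pairCard 𝒜 (A, A') :=
      Set.ncard_image_of_injective _ hσinj
    constructor
    · have hsub : ((h A : Set ℕ) ∩ ↑(h A')) ⊆
          (σ '' ((A : Set ℕ) ∩ ↑A')) ∪ (S2 A ∪ S2 A') := by
        rintro b ⟨hb1, hb2⟩
        by_cases h1 : τ b ∈ (A : Set ℕ)
        · by_cases h2 : τ b ∈ (A' : Set ℕ)
          · exact Or.inl ⟨τ b, ⟨h1, h2⟩, hστ b⟩
          · exact Or.inr (Or.inr ⟨hb2, h2⟩)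
        · exact Or.inr (Or.inl ⟨hb1, h1⟩)
      have hfinU : ((σ '' ((A : Set ℕ) ∩ ↑A')) ∪ (S2 A ∪ S2 A')).Finite :=
        (hfinA.image σ).union ((conv2 A).union (conv2 A'))
      have h1 : pairCard ℬ (h A, h A') ≤
          ((σ '' ((A : Set ℕ) ∩ ↑A')) ∪ (S2 A ∪ S2 A')).ncard :=
        Set.ncard_le_ncard hsub hfinU
      have h2 := Set.ncard_union_le (σ '' ((A : Set ℕ) ∩ ↑A')) (S2 A ∪ S2 A')
      have h3 := Set.ncard_union_le (S2 A) (S2 A')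
      show _ ≤ pairCard 𝒜 (A, A') + ((S1 A).ncard + (S2 A).ncard)
          + ((S1 A').ncard + (S2 A').ncard)
      omega
    · have hsub : σ '' ((A : Set ℕ) ∩ ↑A') ⊆
          ((h A : Set ℕ) ∩ ↑(h A')) ∪ (σ '' S1 A ∪ σ '' S1 A') := by
        rintro b ⟨a, ⟨ha1, ha2⟩, rfl⟩
        by_cases h1 : σ a ∈ (h A : Set ℕ)
        · by_cases h2 : σ a ∈ (h A' : Set ℕ)
          · exact Or.inl ⟨h1, h2⟩
          · exact Or.inr (Or.inr ⟨a, ⟨ha2, h2⟩, rfl⟩)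
        · exact Or.inr (Or.inl ⟨a, ⟨ha1, h1⟩, rfl⟩)
      have hfinU : (((h A : Set ℕ) ∩ ↑(h A')) ∪ (σ '' S1 A ∪ σ '' S1 A')).Finite :=
        hfinB.union (((conv1 A).image σ).union ((conv1 A').image σ))
      have h1 : (σ '' ((A : Set ℕ) ∩ ↑A')).ncard ≤
          (((h A : Set ℕ) ∩ ↑(h A')) ∪ (σ '' S1 A ∪ σ '' S1 A')).ncard :=
        Set.ncard_le_ncard hsub hfinU
      have h2 := Set.ncard_union_le ((h A : Set ℕ) ∩ ↑(h A')) (σ '' S1 A ∪ σ '' S1 A')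
      have h3 := Set.ncard_union_le (σ '' S1 A) (σ '' S1 A')
      have h4 : (σ '' S1 A).ncard = (S1 A).ncard := Set.ncard_image_of_injective _ hσinj
      have h5 : (σ '' S1 A').ncard = (S1 A').ncard := Set.ncard_image_of_injective _ hσinj
      have h6 : pairCard ℬ (h A, h A') = ((h A : Set ℕ) ∩ ↑(h A')).ncard := rfl
      show _ ≤ pairCard ℬ (h A, h A') + ((S1 A).ncard + (S2 A).ncard)
          + ((S1 A').ncard + (S2 A').ncard)
      omega
  -- 𝒜 is uncountable
  have hκ : ¬ Countable ↥𝒜 := by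
    intro hcount
    have h1 := Cardinal.mk_le_aleph0_iff.mpr hcount
    rw [hc𝒜] at h1
    exact absurd h1 (not_le.mpr (lt_of_lt_of_le hcf (Ordinal.cof_ord_le κ)))
  -- pigeonhole: some level set of D is uncountable
  have hk : ∃ k, ¬ ({A : ↥𝒜 | D A = k}).Countable := by
    by_contra hc
    push_neg at hc
    apply hκ
    rw [← Set.countable_univ_iff]
    have huniv : (Set.univ : Set ↥𝒜) = ⋃ k, {A : ↥𝒜 | D A = k} := by
      ext A; simp
    rw [huniv]
    exact Set.countable_iUnion hc
  obtain ⟨k, hs⟩ := hk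
  have unbdd : ∀ N, ∃ p : ↥𝒜 × ↥𝒜, D p.1 = k ∧ D p.2 = k ∧ p.1 ≠ p.2 ∧
      N ≤ pairCard 𝒜 p := by
    intro N
    obtain ⟨A, hA, A', hA', hne, hm⟩ := ad_unbounded hA_inf hAD hs N
    exact ⟨(A, A'), hA, hA', hne, hm⟩
  choose g hg1 hg2 hg3 hg4 using unbdd
  -- recursively choose pairs with strictly increasing intersection sizes
  obtain ⟨f, hf0, hfs⟩ : ∃ f : ℕ → ↥𝒜 × ↥𝒜, f 0 = g (n + 2 * k) ∧
      ∀ i, f (i + 1) = g (pairCard 𝒜 (f i) + 1) :=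
    ⟨fun i => Nat.rec (g (n + 2 * k)) (fun _ p => g (pairCard 𝒜 p + 1)) i, rfl,
      fun i => rfl⟩
  have hrep : ∀ i, ∃ N, f i = g N := by
    intro i
    cases i with
    | zero => exact ⟨_, hf0⟩
    | succ j => exact ⟨_, hfs j⟩
  have hfd1 : ∀ i, D (f i).1 = k := fun i => by
    obtain ⟨N, hN⟩ := hrep i; rw [hN]; exact hg1 N
  have hfd2 : ∀ i, D (f i).2 = k := fun i => by
    obtain ⟨N, hN⟩ := hrep i; rw [hN]; exact hg2 N
  have hfne : ∀ i, (f i).1 ≠ (f i).2 := fun i => by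
    obtain ⟨N, hN⟩ := hrep i; rw [hN]; exact hg3 N
  have hmono : StrictMono (fun i => pairCard 𝒜 (f i)) := by
    apply strictMono_nat_of_lt_succ
    intro i
    have h1 := hg4 (pairCard 𝒜 (f i) + 1)
    rw [← hfs i] at h1
    omega
  have hbase : n + 2 * k ≤ pairCard 𝒜 (f 0) := by rw [hf0]; exact hg4 _
  have hall : ∀ i, n + 2 * k ≤ pairCard 𝒜 (f i) :=
    fun i => hbase.trans (hmono.monotone (Nat.zero_le i))
  have hub : ∀ i, pairCard ℬ (h (f i).1, h (f i).2) ≤ pairCard 𝒜 (f i) + 2 * k ∧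
      pairCard 𝒜 (f i) ≤ pairCard ℬ (h (f i).1, h (f i).2) + 2 * k := by
    intro i
    have h1 := keyineq (f i).1 (f i).2 (hfne i)
    rw [Prod.mk.eta] at h1
    have hd1 := hfd1 i
    have hd2 := hfd2 i
    omega
  -- pigeonhole on the error of the correspondence
  set E : ℕ → ℕ := fun i =>
    pairCard ℬ (h (f i).1, h (f i).2) + 2 * k - pairCard 𝒜 (f i) with hE
  have hEb : ∀ i, E i ≤ 4 * k := by
    intro i
    have := hub i
    simp only [hE]
    omega
  have ⟨i, j, hij, hGij⟩ := Fintype.exists_ne_map_eq_of_card_lt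
    (fun i : Fin (4 * k + 2) => (⟨E i, Nat.lt_succ_of_le (hEb i)⟩ : Fin (4 * k + 1)))
    (by simp)
  have hEij : E i = E j := congrArg Fin.val hGij
  have hvij : (i : ℕ) ≠ (j : ℕ) := fun hc => hij (Fin.ext hc)
  obtain ⟨a, b, hab, hEab⟩ : ∃ a b : ℕ, a < b ∧ E a = E b := by
    rcases lt_or_gt_of_ne hvij with hlt | hlt
    · exact ⟨i, j, hlt, hEij⟩
    · exact ⟨j, i, hlt, hEij.symm⟩
  -- derive the contradiction with oscillation
  have hma : n + 2 * k ≤ pairCard 𝒜 (f a) := hall a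
  have hmb : n + 2 * k ≤ pairCard 𝒜 (f b) := hall b
  have hmab : pairCard 𝒜 (f a) < pairCard 𝒜 (f b) := hmono hab
  have huba := hub a
  have hubb := hub b
  simp only [hE] at hEab
  have hcoene : ∀ i, ((f i).1 : Set ℕ) ≠ ↑(f i).2 :=
    fun i hc => hfne i (Subtype.ext hc)
  have hcoeneB : ∀ i, ((h (f i).1 : Set ℕ)) ≠ ↑(h (f i).2) :=
    fun i hc => hfne i (hbij.1 (Subtype.ext hc))
  have hxA : pairCard 𝒜 (f a) ∈ {x ∈ interSizes 𝒜 | n ≤ x} :=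
    ⟨⟨↑(f a).1, (f a).1.2, ↑(f a).2, (f a).2.2, hcoene a, rfl⟩, by omega⟩
  have hyA : pairCard 𝒜 (f b) ∈ {x ∈ interSizes 𝒜 | n ≤ x} :=
    ⟨⟨↑(f b).1, (f b).1.2, ↑(f b).2, (f b).2.2, hcoene b, rfl⟩, by omega⟩
  have hwB : pairCard ℬ (h (f a).1, h (f a).2) ∈ {x ∈ interSizes ℬ | n ≤ x} :=
    ⟨⟨↑(h (f a).1), (h (f a).1).2, ↑(h (f a).2), (h (f a).2).2, hcoeneB a, rfl⟩,
      by omega⟩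
  have hzB : pairCard ℬ (h (f b).1, h (f b).2) ∈ {x ∈ interSizes ℬ | n ≤ x} :=
    ⟨⟨↑(h (f b).1), (h (f b).1).2, ↑(h (f b).2), (h (f b).2).2, hcoeneB b, rfl⟩,
      by omega⟩
  have hcontra := hoscn _ hxA _ hyA _ hwB _ hzB (by omega) (by omega)
  apply hcontra
  omega
end

section
/- Let L = {k_n : n ∈ ω} ⊆ ω be a set enumerated so that k_n > Σ_{i<n} k_i for every n. Then there exists a Luzin almost disjoint family 𝒜_L on ω of size ω₁ such that for all distinct A, B ∈ 𝒜_L, |A ∩ B| ∈ L. -/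
open Set Cardinal

/-- An AD family is Luzin if it can be enumerated as ⟨A_α : α < ω₁⟩ so that for
every α < ω₁ and every n ∈ ω, {β < α : A_α ∩ A_β ⊆ n} is finite. -/
def IsLuzinFamily (𝒜 : Set (Set ℕ)) : Prop :=
  ∃ A : {α : Ordinal.{0} // α < (Cardinal.aleph 1).ord} → Set ℕ,
    Function.Injective A ∧ Set.range A = 𝒜 ∧
    ∀ α, ∀ n : ℕ, {β | β < α ∧ A α ∩ A β ⊆ Set.Iio n}.Finite

section Core

variable (k : ℕ → ℕ) (B : ℕ → Set ℕ)

/-- The "free part" of `B i`: elements of `B i` not in any earlier `B j` and `≥ i`. -/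
def Dset (i : ℕ) : Set ℕ := B i \ ((⋃ j ∈ Finset.range i, B j) ∪ Set.Iio i)

lemma Dset_infinite (hinf : ∀ i, (B i).Infinite)
    (had : ∀ i j, j < i → (B i ∩ B j).Finite) (i : ℕ) : (Dset B i).Infinite := by
  have hfin : ((⋃ j ∈ Finset.range i, (B i ∩ B j)) ∪ Set.Iio i).Finite := by
    apply Set.Finite.union
    · exact Set.Finite.biUnion (Finset.finite_toSet _) fun j hj =>
        had i j (Finset.mem_range.mp hj)
    · exact Set.finite_Iio i
  refine Set.Infinite.mono ?_ ((hinf i).diff hfin)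
  intro x hx
  refine ⟨hx.1, ?_⟩
  rintro (hx2 | hx2)
  · simp only [Set.mem_iUnion] at hx2
    obtain ⟨j, hj, hxj⟩ := hx2
    exact hx.2 (Or.inl (by simp only [Set.mem_iUnion]; exact ⟨j, hj, hx.1, hxj⟩))
  · exact hx.2 (Or.inr hx2)

open Classical in
noncomputable def nextF (i c : ℕ) : Finset ℕ :=
  if h : ∃ T : Finset ℕ, ↑T ⊆ Dset B i ∧ T.card = c then h.choose else ∅

lemma nextF_spec (hinf : ∀ i, (B i).Infinite)
    (had : ∀ i j, j < i → (B i ∩ B j).Finite) (i c : ℕ) :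
    ↑(nextF B i c) ⊆ Dset B i ∧ (nextF B i c).card = c := by
  have h : ∃ T : Finset ℕ, ↑T ⊆ Dset B i ∧ T.card = c :=
    (Dset_infinite B hinf had i).exists_subset_card_eq c
  classical
  rw [nextF, dif_pos h]
  exact h.choose_spec

noncomputable def Useq : ℕ → Finset ℕ
  | 0 => ∅
  | (i+1) => Useq i ∪ nextF B i (k i - ((Useq i : Set ℕ) ∩ B i).ncard)

noncomputable def Fseq (i : ℕ) : Finset ℕ :=
  nextF B i (k i - ((Useq k B i : Set ℕ) ∩ B i).ncard)

lemma Useq_succ (i : ℕ) : Useq k B (i+1) = Useq k B i ∪ Fseq k B i := rfl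

end Core

section Core2

variable (k : ℕ → ℕ) (B : ℕ → Set ℕ)
variable (hk : ∀ n : ℕ, (∑ i ∈ Finset.range n, k i) < k n)
variable (hinf : ∀ i, (B i).Infinite)
variable (had : ∀ i j, j < i → (B i ∩ B j).Finite)

include hinf had

lemma Fseq_sub (i : ℕ) : ↑(Fseq k B i) ⊆ Dset B i :=
  (nextF_spec B hinf had i _).1

lemma Fseq_card (i : ℕ) :
    (Fseq k B i).card = k i - ((Useq k B i : Set ℕ) ∩ B i).ncard :=
  (nextF_spec B hinf had i _).2

lemma Useq_sub (i : ℕ) : ↑(Useq k B i) ⊆ ⋃ j ∈ Finset.range i, B j := by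
  induction i with
  | zero => simp [Useq]
  | succ i ih =>
    rw [Useq_succ]
    push_cast
    intro x hx
    rcases hx with hx | hx
    · have := ih hx
      simp only [Set.mem_iUnion, Finset.mem_range] at this ⊢
      obtain ⟨j, hj, h2⟩ := this
      exact ⟨j, hj.trans (Nat.lt_succ_self i), h2⟩
    · have := (Fseq_sub k B hinf had i) hx
      simp only [Set.mem_iUnion, Finset.mem_range]
      exact ⟨i, Nat.lt_succ_self i, this.1⟩

lemma Useq_card (i : ℕ) : (Useq k B i).card ≤ ∑ j ∈ Finset.range i, k j := by
  induction i with
  | zero => simp [Useq]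
  | succ i ih =>
    rw [Useq_succ, Finset.sum_range_succ]
    calc (Useq k B i ∪ Fseq k B i).card ≤ (Useq k B i).card + (Fseq k B i).card :=
          Finset.card_union_le _ _
      _ ≤ (∑ j ∈ Finset.range i, k j) + (Fseq k B i).card := by omega
      _ ≤ (∑ j ∈ Finset.range i, k j) + k i := by
          have h2 := Fseq_card k B hinf had i
          have h3 : (Fseq k B i).card ≤ k i := by omega
          omega

include hk in
lemma scard_lt (i : ℕ) : ((Useq k B i : Set ℕ) ∩ B i).ncard < k i := by
  have h1 : ((Useq k B i : Set ℕ) ∩ B i).ncard ≤ (Useq k B i).card := by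
    rw [← Set.ncard_coe_finset (Useq k B i)]
    exact Set.ncard_le_ncard Set.inter_subset_left (Finset.finite_toSet _)
  exact lt_of_le_of_lt (h1.trans (Useq_card k B hinf had i)) (hk i)

include hk in
lemma Fseq_nonempty (i : ℕ) : (Fseq k B i).Nonempty := by
  rw [← Finset.card_pos, Fseq_card k B hinf had i]
  have := scard_lt k B hk hinf had i
  omega

lemma Fseq_ge (i : ℕ) {x : ℕ} (hx : x ∈ Fseq k B i) : i ≤ x := by
  have := Fseq_sub k B hinf had i hx
  have h2 : x ∉ Set.Iio i := fun h => this.2 (Or.inr h)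
  simpa using h2

lemma Fseq_disj_B (i j : ℕ) (hji : j < i) {x : ℕ} (hx : x ∈ Fseq k B i) : x ∉ B j := by
  intro hxB
  exact (Fseq_sub k B hinf had i hx).2 (Or.inl (by
    simp only [Set.mem_iUnion, Finset.mem_range]; exact ⟨j, hji, hxB⟩))

omit hinf had in
lemma Useq_mono {i j : ℕ} (h : i ≤ j) : Useq k B i ⊆ Useq k B j := by
  induction j with
  | zero => rw [Nat.le_zero.mp h]
  | succ j ih =>
    by_cases h' : i = j + 1
    · subst h'; rfl
    · have hij : i ≤ j := Nat.lt_succ_iff.mp (lt_of_le_of_ne h h')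
      exact (ih hij).trans (by rw [Useq_succ]; exact Finset.subset_union_left)

omit hinf had in
lemma Useq_sub_F (i : ℕ) : ↑(Useq k B i) ⊆ ⋃ j, (Fseq k B j : Set ℕ) := by
  induction i with
  | zero => simp [Useq]
  | succ i ih =>
    rw [Useq_succ]
    push_cast
    rintro x (hx | hx)
    · exact ih hx
    · exact Set.mem_iUnion.mpr ⟨i, hx⟩

lemma inter_eq (i : ℕ) :
    (⋃ j, (Fseq k B j : Set ℕ)) ∩ B i = ((Useq k B i : Set ℕ) ∩ B i) ∪ ↑(Fseq k B i) := by
  ext x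
  simp only [Set.mem_inter_iff, Set.mem_iUnion, Set.mem_union, Finset.coe_union]
  constructor
  · rintro ⟨⟨j, hj⟩, hxB⟩
    rcases lt_trichotomy j i with h | h | h
    · left
      refine ⟨?_, hxB⟩
      have hsub : Fseq k B j ⊆ Useq k B i :=
        (Finset.subset_union_right).trans
          (by rw [← Useq_succ]; exact Useq_mono k B (Nat.succ_le_of_lt h))
      exact_mod_cast hsub hj
    · right; rwa [← h]
    · exact absurd hxB (Fseq_disj_B k B hinf had j i h hj)
  · rintro (⟨hxU, hxB⟩ | hxF)
    · constructor
      · have := Useq_sub k B hinf had i hxU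
        simp only [Set.mem_iUnion, Finset.mem_range] at this
        obtain ⟨j, hj, hBj⟩ := this
        have := Useq_sub_F k B i hxU
        simpa using this
      · exact hxB
    · exact ⟨⟨i, hxF⟩, (Fseq_sub k B hinf had i hxF).1⟩

end Core2

section Core3

variable {k : ℕ → ℕ} {B : ℕ → Set ℕ}

lemma core_exists (hk : ∀ n : ℕ, (∑ i ∈ Finset.range n, k i) < k n)
    (hinf : ∀ i, (B i).Infinite)
    (had : ∀ i j, i ≠ j → (B i ∩ B j).Finite) :
    ∃ X : Set ℕ, X.Infinite ∧
      ∀ i, (X ∩ B i).Finite ∧ (X ∩ B i).ncard = k i ∧ ∃ x ∈ X ∩ B i, i ≤ x := by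
  have had' : ∀ i j, j < i → (B i ∩ B j).Finite := fun i j h => had i j (Nat.ne_of_gt h)
  refine ⟨⋃ j, (Fseq k B j : Set ℕ), ?_, ?_⟩
  · -- infinite: contains an element ≥ n for every n
    apply Set.infinite_of_not_bddAbove
    rintro ⟨m, hm⟩
    obtain ⟨x, hx⟩ := Fseq_nonempty k B hk hinf had' (m + 1)
    have hxX : x ∈ ⋃ j, (Fseq k B j : Set ℕ) := Set.mem_iUnion.mpr ⟨m + 1, hx⟩
    have := hm hxX
    have := Fseq_ge k B hinf had' (m + 1) hx
    omega
  · intro i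
    have heq := inter_eq k B hinf had' i
    have hdisj : Disjoint ((Useq k B i : Set ℕ) ∩ B i) ↑(Fseq k B i) := by
      rw [Set.disjoint_left]
      rintro x ⟨hxU, -⟩ hxF
      have := Useq_sub k B hinf had' i hxU
      simp only [Set.mem_iUnion, Finset.mem_range] at this
      obtain ⟨j, hj, hBj⟩ := this
      exact Fseq_disj_B k B hinf had' i j hj hxF hBj
    have hfin1 : ((Useq k B i : Set ℕ) ∩ B i).Finite :=
      (Finset.finite_toSet _).inter_of_left _
    refine ⟨?_, ?_, ?_⟩
    · rw [heq]; exact hfin1.union (Finset.finite_toSet _)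
    · rw [heq, Set.ncard_union_eq hdisj hfin1 (Finset.finite_toSet _),
        Set.ncard_coe_finset, Fseq_card k B hinf had' i]
      have := scard_lt k B hk hinf had' i
      omega
    · obtain ⟨x, hx⟩ := Fseq_nonempty k B hk hinf had' i
      refine ⟨x, ⟨Set.mem_iUnion.mpr ⟨i, hx⟩, (Fseq_sub k B hinf had' i hx).1⟩,
        Fseq_ge k B hinf had' i hx⟩

end Core3

section Step

/-- The base family: `Iio (k 0)` together with pairwise disjoint infinite tails. -/
def baseSet (k : ℕ → ℕ) (n : ℕ) : Set ℕ :=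
  Set.Iio (k 0) ∪ (fun p => k 0 + Nat.pair n p) '' Set.univ

lemma baseSet_infinite (k : ℕ → ℕ) (n : ℕ) : (baseSet k n).Infinite := by
  apply Set.Infinite.mono Set.subset_union_right
  apply Set.infinite_of_injective_forall_mem (f := fun p => k 0 + Nat.pair n p)
    (hi := fun a b hab => by
      simp only [add_right_inj] at hab
      exact (Nat.pair_eq_pair.mp hab).2)
  intro p; exact ⟨p, trivial, rfl⟩

lemma baseSet_inter (k : ℕ → ℕ) {n m : ℕ} (hnm : n ≠ m) :
    baseSet k n ∩ baseSet k m = Set.Iio (k 0) := by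
  ext x
  simp only [baseSet, Set.mem_inter_iff, Set.mem_union, Set.mem_image, Set.mem_univ,
    true_and, Set.mem_Iio]
  constructor
  · rintro ⟨h1 | ⟨p, rfl⟩, h2⟩
    · exact h1
    · rcases h2 with h2 | ⟨q, hq⟩
      · exact h2
      · simp only [add_right_inj] at hq
        exact absurd (Nat.pair_eq_pair.mp hq).1.symm hnm
  · intro h; exact ⟨Or.inl h, Or.inl h⟩

lemma baseSet_ncard_inter (k : ℕ → ℕ) {n m : ℕ} (hnm : n ≠ m) :
    (baseSet k n ∩ baseSet k m).ncard = k 0 := by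
  rw [baseSet_inter k hnm]
  rw [show Set.Iio (k 0) = ↑(Finset.range (k 0)) by ext x; simp]
  rw [Set.ncard_coe_finset, Finset.card_range]

lemma baseSet_inter_finite (k : ℕ → ℕ) {n m : ℕ} (hnm : n ≠ m) :
    (baseSet k n ∩ baseSet k m).Finite := by
  rw [baseSet_inter k hnm]; exact Set.finite_Iio _

lemma baseSet_injective (k : ℕ → ℕ) : Function.Injective (baseSet k) := by
  intro n m h
  by_contra hnm
  have h1 := baseSet_inter_finite k hnm
  rw [h, Set.inter_self] at h1
  exact baseSet_infinite k m h1

/-- A good extension of a family `S`. -/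
def GoodExt (k : ℕ → ℕ) (S : Set (Set ℕ)) (X : Set ℕ) : Prop :=
  X.Infinite ∧ (∀ B ∈ S, (X ∩ B).Finite ∧ (X ∩ B).ncard ∈ Set.range k) ∧
    ∀ n : ℕ, {B | B ∈ S ∧ X ∩ B ⊆ Set.Iio n}.Finite

open Classical in
noncomputable def stepSet (k : ℕ → ℕ) (S : Set (Set ℕ)) : Set ℕ :=
  if h : ∃ X, GoodExt k S X then h.choose else ∅

lemma stepSet_spec {k : ℕ → ℕ} {S : Set (Set ℕ)} (h : ∃ X, GoodExt k S X) :
    GoodExt k S (stepSet k S) := by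
  classical
  rw [stepSet, dif_pos h]
  exact h.choose_spec

lemma exists_goodExt {k : ℕ → ℕ} (hk : ∀ n : ℕ, (∑ i ∈ Finset.range n, k i) < k n)
    {S : Set (Set ℕ)} (hc : S.Countable) (hSi : S.Infinite)
    (hmem : ∀ B ∈ S, B.Infinite)
    (hadS : ∀ B ∈ S, ∀ C ∈ S, B ≠ C → (B ∩ C).Finite) :
    ∃ X, GoodExt k S X := by
  have : Countable ↥S := hc.to_subtype
  have : Infinite ↥S := hSi.to_subtype
  obtain ⟨d⟩ := nonempty_denumerable ↥S
  let e : ℕ ≃ ↥S := (Denumerable.eqv ↥S).symm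
  set B : ℕ → Set ℕ := fun i => (e i : Set ℕ) with hB
  have hBinj : Function.Injective B := fun i j hij =>
    e.injective (Subtype.val_injective hij)
  have hBmem : ∀ i, B i ∈ S := fun i => (e i).2
  have hBinf : ∀ i, (B i).Infinite := fun i => hmem _ (hBmem i)
  have hBad : ∀ i j, i ≠ j → (B i ∩ B j).Finite := fun i j hij =>
    hadS _ (hBmem i) _ (hBmem j) (fun h => hij (hBinj h))
  obtain ⟨X, hXinf, hX⟩ := core_exists hk hBinf hBad
  refine ⟨X, hXinf, ?_, ?_⟩
  · intro C hC
    have : C = B (e.symm ⟨C, hC⟩) := by simp [hB]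
    rw [this]
    exact ⟨(hX _).1, ⟨_, ((hX _).2.1).symm⟩⟩
  · intro n
    have hsub : {C | C ∈ S ∧ X ∩ C ⊆ Set.Iio n} ⊆ B '' Set.Iio n := by
      rintro C ⟨hC, hCsub⟩
      set i := e.symm ⟨C, hC⟩ with hi
      have hCB : C = B i := by simp [hB, hi]
      refine ⟨i, ?_, hCB.symm⟩
      by_contra hni
      obtain ⟨x, hxmem, hxge⟩ := (hX i).2.2
      rw [← hCB] at hxmem
      have := hCsub hxmem
      simp only [Set.mem_Iio] at this hni
      omega
    exact Set.Finite.subset ((Set.finite_Iio n).image B) hsub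

end Step

section Rec

noncomputable def Aord (k : ℕ → ℕ) : Ordinal.{0} → Set ℕ :=
  Ordinal.lt_wf.fix fun α ih =>
    if h : α < Ordinal.omega0 then baseSet k (Classical.choose (Ordinal.lt_omega0.mp h))
    else stepSet k {X | ∃ β, ∃ _ : β < α, X = ih β ‹_›}

lemma Aord_eq (k : ℕ → ℕ) (α : Ordinal.{0}) :
    Aord k α = if h : α < Ordinal.omega0 then
        baseSet k (Classical.choose (Ordinal.lt_omega0.mp h))
      else stepSet k {X | ∃ β, ∃ _ : β < α, X = Aord k β} :=
  Ordinal.lt_wf.fix_eq _ α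

lemma Aord_nat (k : ℕ → ℕ) (n : ℕ) : Aord k (n : Ordinal) = baseSet k n := by
  rw [Aord_eq]
  have h : (n : Ordinal) < Ordinal.omega0 := Ordinal.nat_lt_omega0 n
  rw [dif_pos h]
  have h2 := Classical.choose_spec (Ordinal.lt_omega0.mp h)
  have h3 : Classical.choose (Ordinal.lt_omega0.mp h) = n := by exact_mod_cast h2.symm
  rw [h3]

lemma Aord_infinite_stage (k : ℕ → ℕ) {α : Ordinal.{0}} (h : ¬ α < Ordinal.omega0) :
    Aord k α = stepSet k {X | ∃ β, ∃ _ : β < α, X = Aord k β} := by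
  rw [Aord_eq, dif_neg h]

/-- The invariant carried through the recursion. -/
def LInv (k : ℕ → ℕ) (α : Ordinal.{0}) : Prop :=
  (Aord k α).Infinite ∧
  (∀ β < α, (Aord k α ∩ Aord k β).Finite ∧ (Aord k α ∩ Aord k β).ncard ∈ Set.range k) ∧
  ∀ n : ℕ, {β | β < α ∧ Aord k α ∩ Aord k β ⊆ Set.Iio n}.Finite

end Rec

section Induction

lemma inv_all {k : ℕ → ℕ} (hk : ∀ n : ℕ, (∑ i ∈ Finset.range n, k i) < k n) :
    ∀ α < (Cardinal.aleph 1).ord, LInv k α := by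
  intro α
  induction α using Ordinal.induction with
  | h α ih =>
  intro hα
  by_cases h : α < Ordinal.omega0
  · -- finite stage
    obtain ⟨n, rfl⟩ := Ordinal.lt_omega0.mp h
    have hbeta : ∀ β < (n : Ordinal), ∃ m : ℕ, m < n ∧ β = (m : Ordinal) := by
      intro β hβ
      obtain ⟨m, rfl⟩ := Ordinal.lt_omega0.mp (hβ.trans (Ordinal.nat_lt_omega0 n))
      exact ⟨m, by exact_mod_cast hβ, rfl⟩
    refine ⟨by rw [Aord_nat]; exact baseSet_infinite k n, ?_, ?_⟩
    · intro β hβ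
      obtain ⟨m, hmn, rfl⟩ := hbeta β hβ
      rw [Aord_nat, Aord_nat]
      have hnm : n ≠ m := (Nat.ne_of_lt hmn).symm
      exact ⟨baseSet_inter_finite k hnm, ⟨0, (baseSet_ncard_inter k hnm).symm⟩⟩
    · intro m
      apply Set.Finite.subset (((Set.finite_Iio n).image (Nat.cast : ℕ → Ordinal)))
      rintro β ⟨hβ, -⟩
      obtain ⟨j, hjn, rfl⟩ := hbeta β hβ
      exact ⟨j, hjn, rfl⟩
  · -- infinite stage
    set S := {X | ∃ β, ∃ _ : β < α, X = Aord k β} with hS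
    have hωα : Ordinal.omega0 ≤ α := le_of_not_gt h
    have hmem : ∀ B ∈ S, B.Infinite := by
      rintro B ⟨β, hβ, rfl⟩
      exact (ih β hβ (hβ.trans hα)).1
    have hpair : ∀ β γ, β < γ → γ < α →
        (Aord k γ ∩ Aord k β).Finite := by
      intro β γ hβγ hγα
      exact ((ih γ hγα (hγα.trans hα)).2.1 β hβγ).1
    have hinj : ∀ β γ, β < γ → γ < α → Aord k β ≠ Aord k γ := by
      intro β γ hβγ hγα heq
      have hfin := hpair β γ hβγ hγα
      rw [← heq, Set.inter_self] at hfin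
      exact (ih β (hβγ.trans hγα) ((hβγ.trans hγα).trans hα)).1 hfin
    have hadS : ∀ B ∈ S, ∀ C ∈ S, B ≠ C → (B ∩ C).Finite := by
      rintro B ⟨β, hβ, rfl⟩ C ⟨γ, hγ, rfl⟩ hne
      rcases lt_trichotomy β γ with hlt | hlt | hlt
      · rw [Set.inter_comm]; exact hpair β γ hlt hγ
      · exact absurd (by rw [hlt]) hne
      · exact hpair γ β hlt hβ
    have hc : S.Countable := by
      have h1 : Countable ↥(Set.Iio α) := by
        rw [← Cardinal.mk_le_aleph0_iff, Ordinal.mk_Iio_ordinal]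
        have h2 : α.card < Cardinal.aleph 1 := Cardinal.lt_ord.mp hα
        have h3 : α.card ≤ Cardinal.aleph0 := by
          refine Order.lt_succ_iff.mp ?_
          rwa [Cardinal.succ_aleph0]
        calc Cardinal.lift.{1} α.card ≤ Cardinal.lift.{1} Cardinal.aleph0 :=
              Cardinal.lift_le.mpr h3
          _ = Cardinal.aleph0 := Cardinal.lift_aleph0
      have h2 : S = Set.range (fun b : ↥(Set.Iio α) => Aord k b.1) := by
        ext X
        constructor
        · rintro ⟨β, hβ, rfl⟩; exact ⟨⟨β, hβ⟩, rfl⟩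
        · rintro ⟨⟨β, hβ⟩, rfl⟩; exact ⟨β, hβ, rfl⟩
      rw [h2]
      exact Set.countable_range _
    have hSi : S.Infinite := by
      apply Set.infinite_of_injective_forall_mem
        (f := fun n : ℕ => Aord k (n : Ordinal))
        (hi := fun a b hab => by
          simp only at hab
          rw [Aord_nat, Aord_nat] at hab
          exact baseSet_injective k hab)
      intro n
      exact ⟨(n : Ordinal), lt_of_lt_of_le (Ordinal.nat_lt_omega0 n) hωα, rfl⟩
    have hgood : GoodExt k S (Aord k α) := by
      rw [Aord_infinite_stage k h]
      exact stepSet_spec (exists_goodExt hk hc hSi hmem hadS)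
    obtain ⟨hXinf, hXmem, hXluzin⟩ := hgood
    refine ⟨hXinf, ?_, ?_⟩
    · intro β hβ
      exact hXmem (Aord k β) ⟨β, hβ, rfl⟩
    · intro n
      have hT := hXluzin n
      apply Set.Finite.of_finite_image (f := Aord k)
      · apply hT.subset
        rintro X ⟨β, ⟨hβ, hsub⟩, rfl⟩
        exact ⟨⟨β, hβ, rfl⟩, hsub⟩
      · intro β hβ2 γ hγ2 heq
        by_contra hne
        rcases lt_trichotomy β γ with hlt | hlt | hlt
        · exact hinj β γ hlt hγ2.1 heq
        · exact hne hlt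
        · exact hinj γ β hlt hβ2.1 heq.symm

end Induction

theorem exists_luzin_family_with_intersections_aux (k : ℕ → ℕ)
    (hk : ∀ n : ℕ, (∑ i ∈ Finset.range n, k i) < k n) :
    ∃ 𝒜 : Set (Set ℕ), ADFamily 𝒜 ∧ IsLuzinFamily 𝒜 ∧
      Cardinal.mk ↥𝒜 = Cardinal.aleph 1 ∧
      ∀ A ∈ 𝒜, ∀ B ∈ 𝒜, A ≠ B → Nat.card ↥(A ∩ B) ∈ Set.range k := by
  classical
  set f : {α : Ordinal.{0} // α < (Cardinal.aleph 1).ord} → Set ℕ :=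
    fun x => Aord k x.1 with hf
  set 𝒜 : Set (Set ℕ) := Set.range f with h𝒜
  have hInv : ∀ x : {α : Ordinal.{0} // α < (Cardinal.aleph 1).ord}, LInv k x.1 :=
    fun x => inv_all hk x.1 x.2
  have hω₁ : Ordinal.omega0 < (Cardinal.aleph 1).ord := by
    rw [← Cardinal.ord_aleph0]
    exact Cardinal.ord_lt_ord.mpr Cardinal.aleph0_lt_aleph_one
  -- pairwise facts
  have hpair : ∀ β γ : Ordinal.{0}, β < γ → γ < (Cardinal.aleph 1).ord →
      (Aord k γ ∩ Aord k β).Finite ∧ (Aord k γ ∩ Aord k β).ncard ∈ Set.range k :=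
    fun β γ hβγ hγ => (inv_all hk γ hγ).2.1 β hβγ
  have hainf : ∀ β : Ordinal.{0}, β < (Cardinal.aleph 1).ord → (Aord k β).Infinite :=
    fun β hβ => (inv_all hk β hβ).1
  have hinj : Function.Injective f := by
    intro x y hxy
    by_contra hne
    have hval : x.1 ≠ y.1 := fun h => hne (Subtype.ext h)
    have hxy' : Aord k x.1 = Aord k y.1 := hxy
    rcases lt_or_gt_of_ne hval with hlt | hlt
    · have := (hpair x.1 y.1 hlt y.2).1
      rw [← hxy', Set.inter_self] at this
      exact hainf x.1 x.2 this
    · have := (hpair y.1 x.1 hlt x.2).1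
      rw [hxy', Set.inter_self] at this
      exact hainf y.1 y.2 this
  have hmem𝒜 : ∀ X ∈ 𝒜, ∃ β < (Cardinal.aleph 1).ord, X = Aord k β := by
    rintro X ⟨x, rfl⟩; exact ⟨x.1, x.2, rfl⟩
  have hADpair : ∀ A ∈ 𝒜, ∀ B ∈ 𝒜, A ≠ B →
      (A ∩ B).Finite ∧ (A ∩ B).ncard ∈ Set.range k := by
    intro A hA B hB hAB
    obtain ⟨β, hβ, rfl⟩ := hmem𝒜 A hA
    obtain ⟨γ, hγ, rfl⟩ := hmem𝒜 B hB
    have hne : β ≠ γ := fun h => hAB (by rw [h])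
    rcases lt_or_gt_of_ne hne with hlt | hlt
    · rw [Set.inter_comm]
      exact hpair β γ hlt hγ
    · exact hpair γ β hlt hβ
  refine ⟨𝒜, ⟨?_, ?_, ?_⟩, ⟨f, hinj, rfl, ?_⟩, ?_, ?_⟩
  · -- 𝒜 infinite
    apply Set.infinite_of_injective_forall_mem
      (f := fun n : ℕ => Aord k (n : Ordinal))
      (hi := fun a b hab => by
        simp only at hab
        rw [Aord_nat, Aord_nat] at hab
        exact baseSet_injective k hab)
    intro n
    exact ⟨⟨(n : Ordinal), (Ordinal.nat_lt_omega0 n).trans hω₁⟩, rfl⟩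
  · -- members infinite
    intro A hA
    obtain ⟨β, hβ, rfl⟩ := hmem𝒜 A hA
    exact hainf β hβ
  · -- pairwise a.d.
    intro A hA B hB hAB
    exact (hADpair A hA B hB hAB).1
  · -- Luzin condition
    intro x n
    have hW : {β : Ordinal.{0} | β < x.1 ∧ Aord k x.1 ∩ Aord k β ⊆ Set.Iio n}.Finite :=
      (inv_all hk x.1 x.2).2.2 n
    have : {β | β < x ∧ f x ∩ f β ⊆ Set.Iio n} =
        Subtype.val ⁻¹' {β : Ordinal.{0} | β < x.1 ∧ Aord k x.1 ∩ Aord k β ⊆ Set.Iio n} := by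
      ext β
      simp only [Set.mem_setOf_eq, Set.mem_preimage, hf]
      exact Iff.and (by exact Subtype.coe_lt_coe.symm) Iff.rfl
    rw [this]
    exact hW.preimage (Subtype.val_injective.injOn) 
  · -- cardinality
    have hcongr : Cardinal.mk {α : Ordinal.{0} // α < (Cardinal.aleph 1).ord} =
        Cardinal.mk ↥(Set.Iio ((Cardinal.aleph 1).ord)) :=
      Cardinal.mk_congr (Equiv.subtypeEquivRight (fun _ => Iff.rfl))
    have h6 : Cardinal.mk {α : Ordinal.{0} // α < (Cardinal.aleph 1).ord} =
        Cardinal.lift.{1,0} (Cardinal.aleph 1) := by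
      rw [hcongr, Ordinal.mk_Iio_ordinal, Cardinal.card_ord]
    have h5 : Cardinal.lift.{0,1} (Cardinal.mk {α : Ordinal.{0} // α < (Cardinal.aleph 1).ord}) =
        Cardinal.lift.{1,0} (Cardinal.mk ↥𝒜) := by
      rw [Cardinal.lift_mk_eq'.{1,0}]
      exact ⟨(Equiv.ofInjective f hinj)⟩
    apply Cardinal.lift_injective.{1,0}
    rw [← h5, h6, Cardinal.lift_lift]
  · -- intersection sizes
    intro A hA B hB hAB
    rw [Nat.card_coe_set_eq]
    exact (hADpair A hA B hB hAB).2

/-- Theorem 13 (construction step): given L = {k_n : n ∈ ω} with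
k_n > Σ_{i<n} k_i, there is a Luzin AD family 𝒜_L of size ω₁ all of whose
pairwise intersection sizes lie in L. -/
theorem exists_luzin_family_with_intersections (k : ℕ → ℕ)
    (hk : ∀ n : ℕ, (∑ i ∈ Finset.range n, k i) < k n) :
    ∃ 𝒜 : Set (Set ℕ), ADFamily 𝒜 ∧ IsLuzinFamily 𝒜 ∧
      Cardinal.mk ↥𝒜 = Cardinal.aleph 1 ∧
      ∀ A ∈ 𝒜, ∀ B ∈ 𝒜, A ≠ B → Nat.card ↥(A ∩ B) ∈ Set.range k :=
  exists_luzin_family_with_intersections_aux k hk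
end

section
/- Let κ be a cardinal with cf(κ) > ω and let 𝒜 be an almost disjoint family on ω of size κ. If there are subfamilies 𝒜₀, 𝒜₁ ⊆ 𝒜, each of size κ, such that the sets {|x ∩ y| : x, y ∈ 𝒜₀, x ≠ y} and {|x ∩ y| : x, y ∈ 𝒜₁, x ≠ y} are almost oscillating, then Ψ(𝒜) is not homeomorphic to Ψ(𝒜₀). -/
open Set Cardinal

/-! A homeomorphism `Ψ(𝒜) ≃ Ψ(𝒜₀)` sends isolated points to isolated points, so it is the sum of a
permutation `e` of `ω` and a bijection `σ : 𝒜 → 𝒜₀`, and continuity in both directions forces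
`e[A]` and `σ A` to differ by finite sets. There are only countably many pairs of finite sets, so
uncountably many `A ∈ 𝒜₁` share the same errors `(E, D)`, and for two of them
`|σ x ∩ σ y| + |E| = |x ∩ y| + |D|`. An uncountable AD family has arbitrarily large intersections;
two such pairs with large sizes `m₁ ≠ m₂` produce the same difference `m₂ - m₁` in `interSizes 𝒜₁`
and in `interSizes 𝒜₀`, beyond any bound, which contradicts almost oscillation. -/

open Topology Filter

theorem Equiv.exists_sumCongr_eq_of_isLeft {α β γ δ : Type*} (f : α ⊕ β ≃ γ ⊕ δ)
    (hf : ∀ p, (f p).isLeft = p.isLeft) :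
    ∃ (e : α ≃ γ) (τ : β ≃ δ), f = e.sumCongr τ := by
  have hr (p : α ⊕ β) : p.isRight ↔ (f p).isRight := by
    rw [← Sum.not_isLeft, ← Sum.not_isLeft, hf]
  refine ⟨(sumIsLeft.symm.trans (f.subtypeEquiv fun p => by rw [hf])).trans sumIsLeft,
    (sumIsRight.symm.trans (f.subtypeEquiv hr)).trans sumIsRight, ?_⟩
  ext (a | b) <;> simp

namespace PsiSpace

variable {𝒜 ℬ : Set (Set ℕ)}

def basicNhd (A : 𝒜) (F : Finset ℕ) : Set (ℕ ⊕ 𝒜) :=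
  insert (.inr A) (.inl '' ((A : Set ℕ) \ F))

theorem basicNhd_antitone (A : 𝒜) : Antitone (basicNhd A) := fun _ _ hFG =>
  insert_subset_insert (image_mono (sdiff_subset_sdiff_right (Finset.coe_subset.2 hFG)))

theorem isOpen_basicNhd (A : 𝒜) (F : Finset ℕ) : IsOpen[psiTop 𝒜] (basicNhd A F) :=
  .basic _ (.inr ⟨A, F, rfl⟩)

theorem isOpen_singleton_inl (n : ℕ) : IsOpen[psiTop 𝒜] {.inl n} :=
  .basic _ (.inl ⟨n, rfl⟩)

theorem hasBasis_nhds_inr (A : 𝒜) :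
    (@nhds _ (psiTop 𝒜) (.inr A)).HasBasis (fun _ => True) (basicNhd A) := by
  convert hasBasis_iInf_principal (basicNhd_antitone A).directed_ge using 1
  rw [psiTop, TopologicalSpace.nhds_generateFrom]
  refine le_antisymm
    (le_iInf fun F => iInf₂_le (basicNhd A F) ⟨mem_insert _ _, .inr ⟨A, F, rfl⟩⟩) (le_iInf₂ ?_)
  rintro s ⟨hs, ⟨n, rfl⟩ | ⟨A', F, rfl⟩⟩
  · simp at hs
  · obtain rfl : A = A' := by simpa using hs
    exact iInf_le _ F

theorem isOpen_singleton_iff (hinf : ∀ A ∈ 𝒜, A.Infinite) (p : ℕ ⊕ 𝒜) :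
    IsOpen[psiTop 𝒜] {p} ↔ p.isLeft := by
  refine ⟨fun hp => ?_, fun hp => ?_⟩
  · rcases p with n | A
    · rfl
    obtain ⟨F, -, hF⟩ := (hasBasis_nhds_inr A).mem_iff.1 (@hp.mem_nhds _ (psiTop 𝒜) _ _ rfl)
    obtain ⟨a, ha⟩ := ((hinf A A.2).sdiff F.finite_toSet).nonempty
    simpa using hF (Or.inr ⟨a, ha, rfl⟩)
  · obtain ⟨n, rfl⟩ := Sum.isLeft_iff.1 hp
    exact isOpen_singleton_inl n

theorem finite_image_sdiff_of_continuous {e : ℕ → ℕ} {τ : 𝒜 → ℬ}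
    (hc : Continuous[psiTop 𝒜, psiTop ℬ] (Sum.map e τ)) (A : 𝒜) :
    (e '' A \ τ A).Finite := by
  let := psiTop 𝒜; let := psiTop ℬ
  have hV : basicNhd (τ A) ∅ ∈ 𝓝 (Sum.map e τ (.inr A)) :=
    (isOpen_basicNhd _ _).mem_nhds (mem_insert _ _)
  obtain ⟨F, -, hF⟩ := (hasBasis_nhds_inr A).mem_iff.1 (hc.continuousAt hV)
  refine (F.finite_toSet.image e).subset ?_
  rintro _ ⟨⟨a, ha, rfl⟩, hea⟩
  refine mem_image_of_mem e (not_not.1 fun haF => hea ?_)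
  simpa [basicNhd] using hF (Or.inr ⟨a, ⟨ha, haF⟩, rfl⟩)

theorem exists_equiv_almost_image_of_homeomorph (h𝒜 : ∀ A ∈ 𝒜, A.Infinite)
    (hℬ : ∀ B ∈ ℬ, B.Infinite) (h : @Homeomorph (ℕ ⊕ 𝒜) (ℕ ⊕ ℬ) (psiTop 𝒜) (psiTop ℬ)) :
    ∃ (e : ℕ ≃ ℕ) (σ : Set ℕ → Set ℕ), MapsTo σ 𝒜 ℬ ∧ InjOn σ 𝒜 ∧
      ∀ A ∈ 𝒜, (e '' A \ σ A).Finite ∧ (σ A \ e '' A).Finite := by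
  let := psiTop 𝒜; let := psiTop ℬ
  have hleft (p : ℕ ⊕ 𝒜) : (h p).isLeft = p.isLeft := by
    rw [Bool.eq_iff_iff, ← isOpen_singleton_iff hℬ, ← isOpen_singleton_iff h𝒜, ← image_singleton,
      h.isOpen_image]
  obtain ⟨e, τ, hτ⟩ := h.toEquiv.exists_sumCongr_eq_of_isLeft hleft
  have hh : ⇑h = Sum.map e τ := funext fun p => by rw [← h.coe_toEquiv, hτ, Equiv.sumCongr_apply]
  have hh' : ⇑h.symm = Sum.map e.symm τ.symm :=
    funext fun p => h.symm_apply_eq.2 (by rw [hh]; cases p <;> simp)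
  have hc : Continuous (Sum.map e τ) := hh ▸ h.continuous
  have hc' : Continuous (Sum.map e.symm τ.symm) := hh' ▸ h.symm.continuous
  set σ := Function.extend Subtype.val (fun A : 𝒜 => (τ A : Set ℕ)) fun _ => ∅
  have hσ (A : 𝒜) : σ A = τ A := Subtype.val_injective.extend_apply _ _ A
  refine ⟨e, σ, fun A hA => hσ ⟨A, hA⟩ ▸ (τ _).2, fun A hA B hB hAB => ?_, fun A hA => ?_⟩
  · rw [hσ ⟨A, hA⟩, hσ ⟨B, hB⟩] at hAB
    exact congrArg Subtype.val (τ.injective (Subtype.ext hAB))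
  · lift A to 𝒜 using hA
    refine hσ A ▸ ⟨finite_image_sdiff_of_continuous hc A, ?_⟩
    have := (finite_image_sdiff_of_continuous hc' (τ A)).image e
    rwa [image_sdiff e.injective, e.image_symm_image, τ.symm_apply_apply] at this

end PsiSpace

theorem Set.exists_not_countable_fiber {α β : Type*} {s : Set α} {t : Set β} {f : α → β}
    (hs : ¬ s.Countable) (hf : MapsTo f s t) (ht : t.Countable) :
    ∃ b ∈ t, ¬ {x ∈ s | f x = b}.Countable := by
  by_contra! hfib
  refine hs ((ht.biUnion hfib).mono fun x hx => mem_biUnion (hf hx) ?_)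
  exact ⟨hx, rfl⟩

section

variable {𝒞 : Set (Set ℕ)}

theorem exists_lt_ncard_inter (h𝒞 : ¬ 𝒞.Countable) (hinf : ∀ A ∈ 𝒞, A.Infinite)
    (had : 𝒞.Pairwise fun A B => (A ∩ B).Finite) (k : ℕ) :
    ∃ A ∈ 𝒞, ∃ B ∈ 𝒞, A ≠ B ∧ k < (A ∩ B).ncard := by
  choose t htA htk using fun A : 𝒞 => (hinf A A.2).exists_subset_card_eq (k + 1)
  obtain ⟨A, B, htAB, hAB⟩ := Function.not_injective_iff.1 fun ht : t.Injective =>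
    h𝒞 (countable_coe_iff.1 ht.countable)
  have hAB' : (A : Set ℕ) ≠ B := Subtype.coe_ne_coe.2 hAB
  refine ⟨A, A.2, B, B.2, hAB', ?_⟩
  calc k < (t A : Set ℕ).ncard := by simp [htk]
    _ ≤ (A ∩ B : Set ℕ).ncard :=
      ncard_le_ncard (subset_inter (htA A) (by rw [htAB]; exact htA B)) (had A.2 B.2 hAB')

theorem ncard_inter_add_eq_of_image {e : ℕ → ℕ} (he : e.Injective) {x y s t : Set ℕ}
    (hE : e '' x \ s = e '' y \ t) (hD : s \ e '' x = t \ e '' y)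
    (hxy : (x ∩ y).Finite) (hDfin : (s \ e '' x).Finite) :
    (s ∩ t).ncard + (e '' x \ s).ncard = (x ∩ y).ncard + (s \ e '' x).ncard := by
  have key : s ∩ t ∪ (e '' x \ s) = e '' (x ∩ y) ∪ (s \ e '' x) := by
    rw [image_inter he]
    ext a
    have hE := congr(a ∈ $hE)
    have hD := congr(a ∈ $hD)
    simp only [mem_union, mem_inter_iff, Set.mem_sdiff, eq_iff_iff] at hE hD ⊢
    tauto
  have hfin : (s ∩ t ∪ (e '' x \ s)).Finite := key ▸ (hxy.image e).union hDfin
  rw [← ncard_union_eq (disjoint_sdiff_right.mono_left inter_subset_left)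
    (hfin.subset subset_union_left) (hfin.subset subset_union_right), key,
    ncard_union_eq (disjoint_sdiff_right.mono_left (image_mono inter_subset_left))
    (hxy.image e) hDfin, ncard_image_of_injective _ he]

theorem exists_shift_ncard_inter (h𝒞 : ¬ 𝒞.Countable) (hinf : ∀ A ∈ 𝒞, A.Infinite)
    (had : 𝒞.Pairwise fun A B => (A ∩ B).Finite) {e : ℕ → ℕ} (he : e.Injective)
    {σ : Set ℕ → Set ℕ} (hσ : ∀ A ∈ 𝒞, (e '' A \ σ A).Finite ∧ (σ A \ e '' A).Finite) :
    ∃ p q : ℕ, ∀ k, ∃ A ∈ 𝒞, ∃ B ∈ 𝒞, A ≠ B ∧ k < (A ∩ B).ncard ∧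
      (σ A ∩ σ B).ncard + q = (A ∩ B).ncard + p := by
  obtain ⟨⟨E, D⟩, ⟨-, hD⟩, h𝒟⟩ := exists_not_countable_fiber h𝒞
    (f := fun A => (e '' A \ σ A, σ A \ e '' A)) (fun A hA => hσ A hA)
    (Countable.ofPred_finite.prod Countable.ofPred_finite)
  refine ⟨D.ncard, E.ncard, fun k => ?_⟩
  obtain ⟨A, ⟨hA, hAED⟩, B, ⟨hB, hBED⟩, hAB, hk⟩ := exists_lt_ncard_inter h𝒟
    (fun A hA => hinf A hA.1) (had.mono fun _ hA => hA.1) k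
  simp only [Prod.mk.injEq] at hAED hBED
  refine ⟨A, hA, B, hB, hAB, hk, ?_⟩
  rw [← hAED.1, ← hAED.2]
  exact ncard_inter_add_eq_of_image he (hAED.1.trans hBED.1.symm) (hAED.2.trans hBED.2.symm)
    (had hA hB hAB) (hAED.2 ▸ hD)

end

theorem not_almostOscillating_of_shift {A B : Set ℕ} {p q : ℕ}
    (h : ∀ k, ∃ b ∈ B, k < b ∧ ∃ a ∈ A, a + q = b + p) : ¬ AlmostOscillating A B := by
  rintro ⟨N, hN⟩
  obtain ⟨b₁, hb₁, hNb₁, a₁, ha₁, h₁⟩ := h (N + q)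
  obtain ⟨b₂, hb₂, hb₁₂, a₂, ha₂, h₂⟩ := h b₁
  exact hN a₁ ⟨ha₁, by omega⟩ a₂ ⟨ha₂, by omega⟩ b₁ ⟨hb₁, by omega⟩ b₂ ⟨hb₂, by omega⟩
    (by omega) (by omega) (by omega)

theorem psi_not_homeomorphic_of_subfamilies_general (κ : Cardinal)
    (hcf : Cardinal.aleph0 < κ.ord.cof)
    (𝒜 : Set (Set ℕ)) (h𝒜 : ADFamily 𝒜)
    (𝒜₀ 𝒜₁ : Set (Set ℕ)) (h₀ : 𝒜₀ ⊆ 𝒜) (h₁ : 𝒜₁ ⊆ 𝒜)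
    (hc₁ : Cardinal.mk ↥𝒜₁ = κ)
    (hosc : AlmostOscillating (interSizes 𝒜₀) (interSizes 𝒜₁)) :
    ¬ Nonempty (@Homeomorph (ℕ ⊕ ↥𝒜) (ℕ ⊕ ↥𝒜₀) (psiTop 𝒜) (psiTop 𝒜₀)) := by
  rintro ⟨h⟩
  obtain ⟨-, hinf, had⟩ := h𝒜
  obtain ⟨e, σ, hσ₀, hσinj, hσ⟩ :=
    PsiSpace.exists_equiv_almost_image_of_homeomorph hinf (fun B hB => hinf B (h₀ hB)) h
  have hunc : ¬ 𝒜₁.Countable := fun hc =>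
    (hcf.trans_le (Ordinal.cof_ord_le κ)).not_ge (hc₁ ▸ le_aleph0_iff_set_countable.2 hc)
  obtain ⟨p, q, hpq⟩ := exists_shift_ncard_inter hunc (fun A hA => hinf A (h₁ hA))
    (fun A hA B hB => had A (h₁ hA) B (h₁ hB)) e.injective fun A hA => hσ A (h₁ hA)
  refine not_almostOscillating_of_shift (p := p) (q := q) (fun k => ?_) hosc
  obtain ⟨A, hA, B, hB, hAB, hk, hshift⟩ := hpq k
  exact ⟨_, ⟨A, hA, B, hB, hAB, Nat.card_coe_set_eq _⟩, hk, _,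
    ⟨σ A, hσ₀ (h₁ hA), σ B, hσ₀ (h₁ hB), hσinj.ne (h₁ hA) (h₁ hB) hAB, Nat.card_coe_set_eq _⟩,
    hshift⟩

/-- Corollary 15: if 𝒜 is an AD family of size κ with cf(κ) > ω admitting two
subfamilies 𝒜₀, 𝒜₁ of size κ whose sets of intersection sizes are almost
oscillating, then Ψ(𝒜) is not homeomorphic to Ψ(𝒜₀). -/
theorem psi_not_homeomorphic_of_subfamilies (κ : Cardinal)
    (hcf : Cardinal.aleph0 < κ.ord.cof)
    (𝒜 : Set (Set ℕ)) (h𝒜 : ADFamily 𝒜) (hc𝒜 : Cardinal.mk ↥𝒜 = κ)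
    (𝒜₀ 𝒜₁ : Set (Set ℕ)) (h₀ : 𝒜₀ ⊆ 𝒜) (h₁ : 𝒜₁ ⊆ 𝒜)
    (hc₀ : Cardinal.mk ↥𝒜₀ = κ) (hc₁ : Cardinal.mk ↥𝒜₁ = κ)
    (hosc : AlmostOscillating (interSizes 𝒜₀) (interSizes 𝒜₁)) :
    ¬ Nonempty (@Homeomorph (ℕ ⊕ ↥𝒜) (ℕ ⊕ ↥𝒜₀) (psiTop 𝒜) (psiTop 𝒜₀)) :=
  psi_not_homeomorphic_of_subfamilies_general κ hcf 𝒜 h𝒜 𝒜₀ 𝒜₁ h₀ h₁ hc₁ hosc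
end

section
/- If A, B ∈ [ω]^ω are almost disjoint (i.e., A ∩ B is finite), then the intersection [S_A] ∩ [S_B] of the corresponding branch sets is finite. -/
open Set

/-- The tree S_A ⊆ 2^{<ω}: a node s (of level n) may take the value 0 at
position n only if n ∈ A; it may always take the value 1. Equivalently,
l ∈ S_A iff every position of l carrying `false` lies in A. -/
def STree (A : Set ℕ) : Set (List Bool) :=
  {l | ∀ i : Fin l.length, l.get i = false → (i : ℕ) ∈ A}

/-- [S_A]: the set of branches of S_A, i.e. those x ∈ 2^ω all of whose initial
segments lie in S_A. -/
def branches (A : Set ℕ) : Set (ℕ → Bool) :=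
  {x | ∀ n : ℕ, (List.ofFn fun i : Fin n => x i) ∈ STree A}

lemma mem_of_false {A : Set ℕ} {x : ℕ → Bool} (hx : x ∈ branches A) {n : ℕ}
    (hn : x n = false) : n ∈ A := by
  have h := hx (n + 1) ⟨n, by simp⟩
  apply h
  rw [List.get_ofFn]
  simpa using hn

/-- If A, B ∈ [ω]^ω are almost disjoint then [S_A] ∩ [S_B] is finite. -/
theorem branches_inter_finite (A B : Set ℕ) (hA : A.Infinite) (hB : B.Infinite)
    (hAB : (A ∩ B).Finite) : (branches A ∩ branches B).Finite := by
  haveI : Finite ↥(A ∩ B) := hAB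
  rw [← Set.finite_coe_iff]
  apply Finite.of_injective (fun x : ↥(branches A ∩ branches B) =>
    fun n : ↥(A ∩ B) => x.1 n)
  intro x y hxy
  ext1
  funext n
  by_cases h : n ∈ A ∩ B
  · exact congrFun hxy ⟨n, h⟩
  · rcases hx : x.1 n with _ | _
    · exact absurd ⟨mem_of_false x.2.1 hx, mem_of_false x.2.2 hx⟩ h
    · rcases hy : y.1 n with _ | _
      · exact absurd ⟨mem_of_false y.2.1 hy, mem_of_false y.2.2 hy⟩ h
      · rfl
end
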